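/- arXiv:1906.07634 — 5 statements merged into one kernel-verified Lean document; each statement's English description precedes it below -/
import Mathlib

section
/- Assume Condition (ii) (H¹-convergence) and Condition (iii) (L²-stability). Then the first Ritz values of the discretised forms satisfy liminf_{n→∞} λ̃_n ≥ λ₁. -/
/-!
Suppose `λ̃ₙ < L` along a subsequence. Normalised near-minimisers `uₖ ∈ S_{nₖ}`, `‖ι uₖ‖ = 1`,
and their interpolated images `wₖ = I_{nₖ} (T uₖ)` are bounded in `V` by coercivity, and
compactness of `ι` makes `ι uₖ` converge along a further subsequence. In place of weak limits we
use points lying in the closed convex hull of every tail of a bounded sequence: in a Hilbert space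
they exist (the minimal-norm points of the nested hulls form a Cauchy sequence), and continuous
convex functionals such as `v ↦ a⁰(v, v)` are lower semicontinuous along them. Such a point `u`
of `(uₖ)` lies in the closure of `⋃ Sₘ`, where Conditions (ii) and (iii) give `ι wₖ → ι (T u)`;
by injectivity of `ι`, `T u` is such a point of `(wₖ)`. Hence `a(u, u) ≤ L` and `‖ι u‖ = 1`,
so `λ₁ ≤ L`.
-/

open Filter Topology Set

section TailHull

variable {E : Type*} [NormedAddCommGroup E] [NormedSpace ℝ E]

def tailHull (u : ℕ → E) (N : ℕ) : Set E := closure (convexHull ℝ (u '' Ici N))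

lemma tailHull_subset {u : ℕ → E} {C : Set E} (hC : IsClosed C) (hconv : Convex ℝ C) {N : ℕ}
    (h : ∀ k ≥ N, u k ∈ C) : tailHull u N ⊆ C :=
  closure_minimal (convexHull_min (by rintro _ ⟨k, hk, rfl⟩; exact h k hk) hconv) hC

lemma mem_of_forall_mem_tailHull {u : ℕ → E} {C : Set E} (hC : IsClosed C) (hconv : Convex ℝ C)
    (h : ∀ᶠ k in atTop, u k ∈ C) {p : E} (hp : ∀ N, p ∈ tailHull u N) : p ∈ C :=
  let ⟨N, hN⟩ := eventually_atTop.1 h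
  tailHull_subset hC hconv hN (hp N)

lemma map_eq_of_forall_mem_tailHull {F : Type*} [NormedAddCommGroup F] [NormedSpace ℝ F]
    (ι : E →L[ℝ] F) {u : ℕ → E} {y : F} (hu : Tendsto (fun k => ι (u k)) atTop (𝓝 y))
    {p : E} (hp : ∀ N, p ∈ tailHull u N) : ι p = y :=
  eq_of_forall_dist_le fun ε hε =>
    mem_of_forall_mem_tailHull (C := ι ⁻¹' Metric.closedBall y ε)
      (Metric.isClosed_closedBall.preimage ι.continuous)
      ((convex_closedBall y ε).linear_preimage ι.toLinearMap)
      (hu.eventually (Metric.closedBall_mem_nhds y hε)) hp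

lemma le_of_forall_mem_tailHull {f : E → ℝ} (hf : ConvexOn ℝ univ f) (hcont : Continuous f)
    {u : ℕ → E} {g : ℕ → ℝ} {c : ℝ} (hg : Tendsto g atTop (𝓝 c))
    (hfg : ∀ᶠ k in atTop, f (u k) ≤ g k) {p : E} (hp : ∀ N, p ∈ tailHull u N) : f p ≤ c := by
  refine le_of_forall_pos_le_add fun δ hδ => ?_
  have hsub : ∀ᶠ k in atTop, u k ∈ {x | f x ≤ c + δ} := by
    filter_upwards [hfg, hg.eventually (eventually_le_nhds (lt_add_of_pos_right c hδ))]
      with k hfk hgk using hfk.trans hgk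
  have hconv : Convex ℝ {x | f x ≤ c + δ} := by simpa using hf.convex_le (c + δ)
  exact mem_of_forall_mem_tailHull (isClosed_le hcont continuous_const) hconv hsub hp

end TailHull

section Hilbert

variable {E : Type*} [NormedAddCommGroup E] [InnerProductSpace ℝ E]

lemma norm_sub_sq_add_norm_sub_sq_le_of_norm_eq_iInf {K : Set E} (hK : Convex ℝ K) {u v w : E}
    (hv : v ∈ K) (hmin : ‖u - v‖ = ⨅ x : K, ‖u - x‖) (hw : w ∈ K) :
    ‖u - v‖ ^ 2 + ‖w - v‖ ^ 2 ≤ ‖u - w‖ ^ 2 := by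
  have hinner := (norm_eq_iInf_iff_real_inner_le_zero hK hv).1 hmin w hw
  have hexp := norm_sub_sq_real (u - v) (w - v)
  rw [sub_sub_sub_cancel_right] at hexp
  linarith

variable [CompleteSpace E]

lemma nonempty_iInter_of_antitone_isClosed_convex_isBounded {K : ℕ → Set E} (hanti : Antitone K)
    (hne : ∀ N, (K N).Nonempty) (hclosed : ∀ N, IsClosed (K N)) (hconv : ∀ N, Convex ℝ (K N))
    (hbdd : Bornology.IsBounded (K 0)) : (⋂ N, K N).Nonempty := by
  obtain ⟨R, hR⟩ := hbdd.exists_norm_le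
  choose v hvK hvmin using fun N =>
    exists_norm_eq_iInf_of_complete_convex (hne N) (hclosed N).isComplete (hconv N) 0
  have hpyth : ∀ {M N}, M ≤ N → ‖v M‖ ^ 2 + ‖v N - v M‖ ^ 2 ≤ ‖v N‖ ^ 2 := fun hMN => by
    simpa using norm_sub_sq_add_norm_sub_sq_le_of_norm_eq_iInf (hconv _) (hvK _) (hvmin _)
      (hanti hMN (hvK _))
  have hmono : Monotone fun N => ‖v N‖ ^ 2 := fun M N hMN => by
    nlinarith [hpyth hMN, sq_nonneg ‖v N - v M‖]
  have hbound : ∀ N, ‖v N‖ ^ 2 ≤ R ^ 2 := fun N =>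
    pow_le_pow_left₀ (norm_nonneg _) (hR _ (hanti (Nat.zero_le N) (hvK N))) 2
  obtain ⟨D, hD⟩ : ∃ D, Tendsto (fun N => ‖v N‖ ^ 2) atTop (𝓝 D) :=
    ⟨_, tendsto_atTop_ciSup hmono ⟨R ^ 2, by rintro _ ⟨N, rfl⟩; exact hbound N⟩⟩
  have hdist : ∀ {M N}, M ≤ N → dist (v N) (v M) ≤ √(D - ‖v M‖ ^ 2) := fun {M N} hMN => by
    rw [dist_eq_norm, Real.le_sqrt (norm_nonneg _) (sub_nonneg.2 (hmono.ge_of_tendsto hD M))]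
    linarith [hpyth hMN, hmono.ge_of_tendsto hD N]
  have hcauchy : CauchySeq v := by
    refine cauchySeq_of_le_tendsto_0 (fun N => 2 * √(D - ‖v N‖ ^ 2)) (fun m n N hm hn => ?_) ?_
    · linarith [dist_triangle_right (v m) (v n) (v N), hdist hm, hdist hn]
    · simpa using ((tendsto_const_nhds (x := D)).sub hD).sqrt.const_mul 2
  obtain ⟨p, hp⟩ := cauchySeq_tendsto_of_complete hcauchy
  exact ⟨p, mem_iInter.2 fun N => (hclosed N).mem_of_tendsto hp
    (eventually_atTop.2 ⟨N, fun n hn => hanti hn (hvK n)⟩)⟩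

lemma exists_forall_mem_tailHull {u : ℕ → E} (hu : Bornology.IsBounded (range u)) :
    ∃ p, ∀ N, p ∈ tailHull u N := by
  have hanti : Antitone (tailHull u) := fun M N hMN =>
    closure_mono (convexHull_mono (image_mono fun _ hk => le_trans hMN hk))
  obtain ⟨p, hp⟩ := nonempty_iInter_of_antitone_isClosed_convex_isBounded hanti
    (fun N => ⟨u N, subset_closure (subset_convexHull ℝ _ ⟨N, self_mem_Ici, rfl⟩)⟩)
    (fun N => isClosed_closure) (fun N => (convex_convexHull ℝ _).closure)
    (isBounded_convexHull.2 (hu.subset (image_subset_range _ _))).closure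
  exact ⟨p, mem_iInter.1 hp⟩

lemma exists_map_eq_forall_mem_tailHull {F : Type*} [NormedAddCommGroup F] [NormedSpace ℝ F]
    (ι : E →L[ℝ] F) {u : ℕ → E} (hu : Bornology.IsBounded (range u)) {y : F}
    (huy : Tendsto (fun k => ι (u k)) atTop (𝓝 y)) : ∃ p, ι p = y ∧ ∀ N, p ∈ tailHull u N :=
  let ⟨p, hp⟩ := exists_forall_mem_tailHull hu
  ⟨p, map_eq_of_forall_mem_tailHull ι huy hp, hp⟩

end Hilbert

section Quadratic

variable {E : Type*} [NormedAddCommGroup E] [NormedSpace ℝ E]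

-- `t f x + s f y - f (t x + s y) = t s f (x - y)` for `f x = b x x` and `t + s = 1`.
lemma LinearMap.convexOn_apply_self (b : E →ₗ[ℝ] E →ₗ[ℝ] ℝ) (hb : ∀ v, 0 ≤ b v v) :
    ConvexOn ℝ univ fun v => b v v := by
  refine ⟨convex_univ, fun x _ y _ t s ht hs hts => ?_⟩
  have hxy := mul_nonneg (mul_nonneg ht hs) (hb (x - y))
  obtain rfl : s = 1 - t := by linarith
  simp only [map_add, map_sub, map_smul, LinearMap.add_apply, LinearMap.sub_apply,
    LinearMap.smul_apply, smul_eq_mul] at hxy ⊢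
  nlinarith

lemma LinearMap.continuous_apply_self (b : E →ₗ[ℝ] E →ₗ[ℝ] ℝ) (M : ℝ)
    (hb : ∀ u v, |b u v| ≤ M * ‖u‖ * ‖v‖) : Continuous fun v => b v v :=
  (b.mkContinuous₂ M hb).continuous₂.comp (continuous_id.prodMk continuous_id)

end Quadratic

lemma tendsto_of_forall_eventually_dist_le {α X : Type*} [PseudoMetricSpace X] {l : Filter α}
    {x : α → X} {y : X}
    (h : ∀ δ > 0, ∃ r : α → ℝ, ∃ ρ < δ, Tendsto r l (𝓝 ρ) ∧ ∀ᶠ k in l, dist (x k) y ≤ r k) :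
    Tendsto x l (𝓝 y) :=
  Metric.tendsto_nhds.2 fun ε hε => by
    obtain ⟨r, ρ, hρ, hr, hxr⟩ := h ε hε
    filter_upwards [hxr, hr.eventually (eventually_lt_nhds hρ)] with k h1 h2 using h1.trans_lt h2

lemma isBounded_range_of_coercive {E : Type*} [NormedAddCommGroup E] [NormedSpace ℝ E]
    {b : E →ₗ[ℝ] E →ₗ[ℝ] ℝ} {α c : ℝ} (hα : 0 < α) (hcoer : ∀ v, α * ‖v‖ ^ 2 ≤ b v v)
    {x : ℕ → E} (hx : ∀ k, b (x k) (x k) ≤ c) : Bornology.IsBounded (range x) := by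
  refine isBounded_iff_forall_norm_le.2 ⟨√(c / α), forall_mem_range.2 fun k => ?_⟩
  rw [← abs_norm]
  exact Real.abs_le_sqrt ((le_div_iff₀' hα).2 ((hcoer _).trans (hx k)))

section RitzValues

variable {V H : Type*} [NormedAddCommGroup V] [InnerProductSpace ℝ V]
  [NormedAddCommGroup H] [NormedSpace ℝ H]
  {ι : V →L[ℝ] H} {a0 a1 : V →ₗ[ℝ] V →ₗ[ℝ] ℝ} {T : V →ₗ[ℝ] V} {S : ℕ → Submodule ℝ V}
  {I : ℕ → V →ₗ[ℝ] V}

lemma tendsto_map_interp_of_mem_closure {CT C : ℝ} (hT_H : ∀ v, ‖ι (T v)‖ ≤ CT * ‖ι v‖)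
    (hS_mono : Monotone S)
    (hii : ∀ f : V, (∃ m, f ∈ S m) → Tendsto (fun n => ‖I n (T f) - T f‖) atTop (𝓝 0))
    (hiii : ∀ n, ∀ v ∈ S n, ‖ι (I n (T v))‖ ≤ C * ‖ι v‖)
    {n : ℕ → ℕ} (hn : Tendsto n atTop atTop) {U : ℕ → V} (hU : ∀ k, U k ∈ S (n k))
    {u : V} (hu : u ∈ closure (⋃ m, (S m : Set V)))
    (hUu : Tendsto (fun k => ι (U k)) atTop (𝓝 (ι u))) :
    Tendsto (fun k => ι (I (n k) (T (U k)))) atTop (𝓝 (ι (T u))) := by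
  refine tendsto_of_forall_eventually_dist_le fun δ hδ => ?_
  have hopen : IsOpen {x : V | (C + CT) * ‖ι u - ι x‖ < δ} :=
    isOpen_lt (by fun_prop) continuous_const
  obtain ⟨f, hfδ, hf⟩ := mem_closure_iff.1 hu _ hopen (by simpa using hδ)
  obtain ⟨m, hfm⟩ := mem_iUnion.1 hf
  refine ⟨fun k => C * ‖ι (U k) - ι f‖ + ‖ι (I (n k) (T f) - T f)‖ + CT * ‖ι f - ι u‖,
    (C + CT) * ‖ι u - ι f‖, hfδ, ?_, ?_⟩
  · have hinterp : Tendsto (fun k => ι (I (n k) (T f) - T f)) atTop (𝓝 0) := by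
      have h0 : Tendsto (fun k => I (n k) (T f) - T f) atTop (𝓝 0) :=
        tendsto_zero_iff_norm_tendsto_zero.2 ((hii f ⟨m, hfm⟩).comp hn)
      exact ι.map_zero ▸ (ι.continuous.tendsto 0).comp h0
    convert (((hUu.sub_const (ι f)).norm.const_mul C).add hinterp.norm).add_const
      (CT * ‖ι f - ι u‖) using 2
    rw [norm_zero, add_zero, norm_sub_rev (ι f)]
    ring
  · filter_upwards [hn.eventually_ge_atTop m] with k hk
    have hsplit : ι (I (n k) (T (U k))) - ι (T u)
        = ι (I (n k) (T (U k - f))) + ι (I (n k) (T f) - T f) + ι (T (f - u)) := by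
      simp only [map_sub]
      abel
    have hstab : ‖ι (I (n k) (T (U k - f)))‖ ≤ C * ‖ι (U k) - ι f‖ := by
      simpa only [map_sub] using hiii (n k) _ (sub_mem (hU k) (hS_mono hk hfm))
    have hT : ‖ι (T (f - u))‖ ≤ CT * ‖ι f - ι u‖ := by
      simpa only [map_sub] using hT_H (f - u)
    rw [dist_eq_norm, hsplit]
    linarith [norm_add₃_le (a := ι (I (n k) (T (U k - f)))) (b := ι (I (n k) (T f) - T f))
      (c := ι (T (f - u)))]

lemma exists_energy_le_of_ritz_seq [CompleteSpace V] (hι_inj : Function.Injective ι)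
    (hι_cpt : IsCompactOperator ι) {M : ℝ}
    (ha0_bdd : ∀ u v : V, |a0 u v| ≤ M * ‖u‖ * ‖v‖) (ha1_bdd : ∀ u v : V, |a1 u v| ≤ M * ‖u‖ * ‖v‖)
    {α : ℝ} (hα : 0 < α) (ha0_coer : ∀ v : V, α * ‖v‖ ^ 2 ≤ a0 v v)
    (ha1_coer : ∀ v : V, α * ‖v‖ ^ 2 ≤ a1 v v)
    {CT C : ℝ} (hT_H : ∀ v, ‖ι (T v)‖ ≤ CT * ‖ι v‖) (hS_mono : Monotone S)
    (hii : ∀ f : V, (∃ m, f ∈ S m) → Tendsto (fun n => ‖I n (T f) - T f‖) atTop (𝓝 0))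
    (hiii : ∀ n, ∀ v ∈ S n, ‖ι (I n (T v))‖ ≤ C * ‖ι v‖)
    {n : ℕ → ℕ} (hn : Tendsto n atTop atTop) {u : ℕ → V} (hu : ∀ k, u k ∈ S (n k))
    (hu1 : ∀ k, ‖ι (u k)‖ = 1) {c : ℝ}
    (hc : ∀ k, a0 (u k) (u k) + a1 (I (n k) (T (u k))) (I (n k) (T (u k))) ≤ c) :
    ∃ v, ‖ι v‖ = 1 ∧ a0 v v + a1 (T v) (T v) ≤ c := by
  set w : ℕ → V := fun k => I (n k) (T (u k))
  have ha0 : ∀ v, 0 ≤ a0 v v := fun v => le_trans (by positivity) (ha0_coer v)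
  have ha1 : ∀ v, 0 ≤ a1 v v := fun v => le_trans (by positivity) (ha1_coer v)
  have hu_bdd : Bornology.IsBounded (range u) :=
    isBounded_range_of_coercive (c := c) hα ha0_coer fun k => by linarith [hc k, ha1 (w k)]
  have hw_bdd : Bornology.IsBounded (range w) :=
    isBounded_range_of_coercive (c := c) hα ha1_coer fun k => by linarith [hc k, ha0 (u k)]
  obtain ⟨K, hK, hιK⟩ := hι_cpt.image_subset_compact_of_bounded (f := ι.toLinearMap) hu_bdd
  obtain ⟨⟨h, A⟩, -, ψ, hψ, hlim⟩ := (hK.prod (isCompact_Icc (a := 0) (b := c))).tendsto_subseq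
    (x := fun k => (ι (u k), a0 (u k) (u k)))
    fun k => ⟨hιK ⟨u k, mem_range_self k, rfl⟩, ha0 _, by linarith [hc k, ha1 (w k)]⟩
  have hUh : Tendsto (fun j => ι (u (ψ j))) atTop (𝓝 h) := hlim.fst_nhds
  have hA : Tendsto (fun j => a0 (u (ψ j)) (u (ψ j))) atTop (𝓝 A) := hlim.snd_nhds
  obtain ⟨p, hιp, hp⟩ :=
    exists_map_eq_forall_mem_tailHull ι (hu_bdd.subset (range_comp_subset_range ψ u)) hUh
  have hp_closure : p ∈ closure (⋃ m, (S m : Set V)) := by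
    rw [← Submodule.coe_iSup_of_directed S hS_mono.directed_le]
    exact mem_of_forall_mem_tailHull isClosed_closure (Submodule.convex _).closure
      (Eventually.of_forall fun j => subset_closure (Submodule.mem_iSup_of_mem _ (hu (ψ j)))) hp
  have hW := tendsto_map_interp_of_mem_closure hT_H hS_mono hii hiii (hn.comp hψ.tendsto_atTop)
    (fun j => hu (ψ j)) hp_closure (hιp ▸ hUh)
  obtain ⟨q, hιq, hq⟩ :=
    exists_map_eq_forall_mem_tailHull ι (hw_bdd.subset (range_comp_subset_range ψ w)) hW
  obtain rfl := hι_inj hιq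
  have hp0 : a0 p p ≤ A :=
    le_of_forall_mem_tailHull (a0.convexOn_apply_self ha0) (a0.continuous_apply_self M ha0_bdd) hA
      (Eventually.of_forall fun j => le_rfl) hp
  have hq1 : a1 (T p) (T p) ≤ c - A :=
    le_of_forall_mem_tailHull (a1.convexOn_apply_self ha1) (a1.continuous_apply_self M ha1_bdd)
      (tendsto_const_nhds.sub hA) (Eventually.of_forall fun j => le_sub_iff_add_le'.2 (hc (ψ j))) hq
  refine ⟨p, ?_, by linarith⟩
  rw [hιp]
  exact tendsto_nhds_unique hUh.norm (by simp [hu1])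

lemma csInf_le_quotient {S : Submodule ℝ V} (J : V →ₗ[ℝ] V) (ha0 : ∀ v, 0 ≤ a0 v v)
    (ha1 : ∀ v, 0 ≤ a1 v v) {v : V} (hv : v ∈ S) (hv0 : v ≠ 0) :
    sInf {x : ℝ | ∃ v : V, v ∈ S ∧ v ≠ 0 ∧ x = ((a0 v v + a1 (J v) (J v)) / 2) / ‖ι v‖ ^ 2}
      ≤ ((a0 v v + a1 (J v) (J v)) / 2) / ‖ι v‖ ^ 2 :=
  csInf_le ⟨0, by
    rintro _ ⟨w, -, -, rfl⟩
    exact div_nonneg (by linarith [ha0 w, ha1 (J w)]) (sq_nonneg _)⟩ ⟨v, hv, hv0, rfl⟩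

lemma exists_unit_of_sInf_lt (hι_inj : Function.Injective ι) {S : Submodule ℝ V} (hS : S ≠ ⊥)
    (J : V →ₗ[ℝ] V) {L : ℝ}
    (h : sInf {x : ℝ | ∃ v : V, v ∈ S ∧ v ≠ 0 ∧
      x = ((a0 v v + a1 (J v) (J v)) / 2) / ‖ι v‖ ^ 2} < L) :
    ∃ u ∈ S, ‖ι u‖ = 1 ∧ a0 u u + a1 (J u) (J u) ≤ 2 * L := by
  obtain ⟨v, hvS, hv0⟩ := (Submodule.ne_bot_iff S).1 hS
  obtain ⟨_, ⟨v, hvS, hv0, rfl⟩, hlt⟩ := exists_lt_of_csInf_lt (by exact ⟨_, v, hvS, hv0, rfl⟩) h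
  have hιv : 0 < ‖ι v‖ := norm_pos_iff.2 ((map_ne_zero_iff ι hι_inj).2 hv0)
  refine ⟨‖ι v‖⁻¹ • v, S.smul_mem _ hvS, by simp [norm_smul, hιv.ne'], ?_⟩
  simp only [map_smul, LinearMap.smul_apply, smul_eq_mul]
  rw [div_div, div_lt_iff₀ (by positivity)] at hlt
  field_simp
  nlinarith

end RitzValues

theorem to_ritz_lower_bound_general
    {V H : Type*}
    [NormedAddCommGroup V] [InnerProductSpace ℝ V] [CompleteSpace V]
    [NormedAddCommGroup H] [InnerProductSpace ℝ H]
    (ι : V →L[ℝ] H) (hι_inj : Function.Injective ι)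
    (hι_cpt : IsCompactOperator ι)
    (a0 a1 : V →ₗ[ℝ] V →ₗ[ℝ] ℝ)
    (M : ℝ)
    (ha0_bdd : ∀ u v : V, |a0 u v| ≤ M * ‖u‖ * ‖v‖)
    (ha1_bdd : ∀ u v : V, |a1 u v| ≤ M * ‖u‖ * ‖v‖)
    (α : ℝ) (hα : 0 < α)
    (ha0_coer : ∀ v : V, α * ‖v‖ ^ 2 ≤ a0 v v)
    (ha1_coer : ∀ v : V, α * ‖v‖ ^ 2 ≤ a1 v v)
    (T : V →ₗ[ℝ] V) (CT : ℝ)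
    (hT_H : ∀ v : V, ‖ι (T v)‖ ≤ CT * ‖ι v‖)
    (S : ℕ → Submodule ℝ V) (hS_mono : Monotone S)
    (hS_ne : ∀ n, S n ≠ ⊥)
    (lam1 : ℝ)
    (hlam1 : lam1 = sInf {x : ℝ | ∃ v : V, v ≠ 0 ∧
      x = ((a0 v v + a1 (T v) (T v)) / 2) / ‖ι v‖ ^ 2})
    (I : ℕ → V →ₗ[ℝ] V)
    (lamT : ℕ → ℝ)
    (hlamT : ∀ n, lamT n = sInf {x : ℝ | ∃ v : V, v ∈ S n ∧ v ≠ 0 ∧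
      x = ((a0 v v + a1 (I n (T v)) (I n (T v))) / 2) / ‖ι v‖ ^ 2})
    -- Condition (ii): H¹-convergence of the interpolated transfer operator
    (hii : ∀ f : V, (∃ m, f ∈ S m) →
      Tendsto (fun n => ‖I n (T f) - T f‖) atTop (𝓝 0))
    -- Condition (iii): L²-stability
    (C : ℝ)
    (hiii : ∀ m : ℕ, ∀ n ≥ m, ∀ v ∈ S m, ‖ι (I n (T v))‖ ≤ C * ‖ι v‖)
    :
    lam1 ≤ liminf lamT atTop := by
  have ha0 : ∀ v, 0 ≤ a0 v v := fun v => le_trans (by positivity) (ha0_coer v)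
  have ha1 : ∀ v, 0 ≤ a1 v v := fun v => le_trans (by positivity) (ha1_coer v)
  obtain ⟨f, hf, hf0⟩ := (Submodule.ne_bot_iff _).1 (hS_ne 0)
  have hbdd : IsBoundedUnder (· ≤ ·) atTop lamT := by
    have hIf : Tendsto (fun n => I n (T f)) atTop (𝓝 (T f)) :=
      tendsto_iff_norm_sub_tendsto_zero.2 (hii f ⟨0, hf⟩)
    have hquot := ((tendsto_const_nhds (x := a0 f f)).add
      (((a1.continuous_apply_self M ha1_bdd).tendsto _).comp hIf)).div_const 2 |>.div_const
      (‖ι f‖ ^ 2)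
    refine hquot.isBoundedUnder_le.mono_le (Eventually.of_forall fun n => ?_)
    rw [hlamT]
    exact csInf_le_quotient ((I n).comp T) ha0 ha1 (hS_mono (Nat.zero_le n) hf) hf0
  refine le_of_forall_gt_imp_ge_of_dense fun L hL => ?_
  obtain ⟨φ, hφ, hφL⟩ :=
    extraction_of_frequently_atTop (frequently_lt_of_liminf_lt hbdd.isCoboundedUnder_ge hL)
  choose u hu hu1 hu2 using fun k => exists_unit_of_sInf_lt hι_inj (hS_ne (φ k)) ((I (φ k)).comp T)
    ((hlamT (φ k)).symm.trans_lt (hφL k))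
  obtain ⟨v, hv1, hv⟩ := exists_energy_le_of_ritz_seq hι_inj hι_cpt ha0_bdd ha1_bdd hα ha0_coer
    ha1_coer hT_H hS_mono hii (fun n => hiii n n le_rfl) hφ.tendsto_atTop hu hu1 hu2
  have hv0 : v ≠ 0 := by
    rintro rfl
    simp at hv1
  calc lam1 ≤ ((a0 v v + a1 (T v) (T v)) / 2) / ‖ι v‖ ^ 2 :=
        hlam1 ▸ csInf_le ⟨0, by
          rintro _ ⟨w, -, rfl⟩
          exact div_nonneg (by linarith [ha0 w, ha1 (T w)]) (sq_nonneg _)⟩ ⟨v, hv0, rfl⟩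
    _ ≤ L := by rw [hv1]; linarith

/-- **Lower bound for the first Ritz values (Theorem 4.2 of the paper).**
Under Condition (ii) (H¹-convergence) and Condition (iii) (L²-stability),
`liminf λ̃ₙ ≥ λ₁`. -/
theorem to_ritz_lower_bound
    {V H : Type*}
    [NormedAddCommGroup V] [InnerProductSpace ℝ V] [CompleteSpace V]
    [NormedAddCommGroup H] [InnerProductSpace ℝ H] [CompleteSpace H]
    (ι : V →L[ℝ] H) (hι_inj : Function.Injective ι)
    (hι_cpt : IsCompactOperator ι)
    (a0 a1 : V →ₗ[ℝ] V →ₗ[ℝ] ℝ)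
    (ha0_symm : ∀ u v : V, a0 u v = a0 v u)
    (ha1_symm : ∀ u v : V, a1 u v = a1 v u)
    (M : ℝ)
    (ha0_bdd : ∀ u v : V, |a0 u v| ≤ M * ‖u‖ * ‖v‖)
    (ha1_bdd : ∀ u v : V, |a1 u v| ≤ M * ‖u‖ * ‖v‖)
    (α : ℝ) (hα : 0 < α)
    (ha0_coer : ∀ v : V, α * ‖v‖ ^ 2 ≤ a0 v v)
    (ha1_coer : ∀ v : V, α * ‖v‖ ^ 2 ≤ a1 v v)
    (T : V →ₗ[ℝ] V) (CV CT : ℝ)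
    (hT_bdd : ∀ v : V, ‖T v‖ ≤ CV * ‖v‖)
    (hT_H : ∀ v : V, ‖ι (T v)‖ ≤ CT * ‖ι v‖)
    (S : ℕ → Submodule ℝ V) (hS_mono : Monotone S)
    (hS_ne : ∀ n, S n ≠ ⊥) (hS_fd : ∀ n, FiniteDimensional ℝ (S n))
    (lam1 : ℝ)
    (hlam1 : lam1 = sInf {x : ℝ | ∃ v : V, v ≠ 0 ∧
      x = ((a0 v v + a1 (T v) (T v)) / 2) / ‖ι v‖ ^ 2})
    (hdensity : sInf {x : ℝ | ∃ v : V, (∃ n, v ∈ S n) ∧ v ≠ 0 ∧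
      x = ((a0 v v + a1 (T v) (T v)) / 2) / ‖ι v‖ ^ 2} = lam1)
    (I : ℕ → V →ₗ[ℝ] V)
    (lamT : ℕ → ℝ)
    (hlamT : ∀ n, lamT n = sInf {x : ℝ | ∃ v : V, v ∈ S n ∧ v ≠ 0 ∧
      x = ((a0 v v + a1 (I n (T v)) (I n (T v))) / 2) / ‖ι v‖ ^ 2})
    -- Condition (ii): H¹-convergence of the interpolated transfer operator
    (hii : ∀ f : V, (∃ m, f ∈ S m) →
      Tendsto (fun n => ‖I n (T f) - T f‖) atTop (𝓝 0))
    -- Condition (iii): L²-stability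
    (C : ℝ) (hC : 0 < C)
    (hiii : ∀ m : ℕ, ∀ n ≥ m, ∀ v ∈ S m, ‖ι (I n (T v))‖ ≤ C * ‖ι v‖)
    :
    lam1 ≤ liminf lamT atTop :=
  to_ritz_lower_bound_general ι hι_inj hι_cpt a0 a1 M ha0_bdd ha1_bdd α hα ha0_coer ha1_coer T CT
    hT_H S hS_mono hS_ne lam1 hlam1 I lamT hlamT hii C hiii
end

section
/- Suppose each I_n is the orthogonal projection of V onto a closed subspace W_n ⊆ V, and that I_n f → f in V for every f ∈ V (so in particular Condition (ii) holds). Then the first Ritz values satisfy liminf_{n→∞} λ̃_n ≥ λ₁, without assuming Condition (iii) (L²-stability). This is the H¹-Galerkin version of the lower-bound theorem. -/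
/-!
Along an ultrafilter `U` on which `λ̃ₙ` stays below `liminf λ̃ₙ + ε`, pick near-minimisers `uₙ`
of the discrete Rayleigh quotients with `‖ι uₙ‖ = 1`. Coercivity of `a⁰` bounds them in `V`, so
they converge weakly along `U` to some `v`; compactness of `ι` makes `ι uₙ → ι v` strongly, whence
`‖ι v‖ = 1`. The `Iₙ` are symmetric and converge strongly to the identity, so `Iₙ (T uₙ)`
converges weakly to `T v`, and weak lower semicontinuity of the nonnegative forms `a⁰`, `a¹`
gives `a(v, v) ≤ liminf λ̃ₙ + ε`.
-/

open Filter Topology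
open scoped RealInnerProductSpace

section WeakTendsto

variable {α V W : Type*} [NormedAddCommGroup V] [NormedAddCommGroup W]

section Normed

variable [NormedSpace ℝ V] [NormedSpace ℝ W]

def WeakTendsto (u : α → V) (l : Filter α) (v : V) : Prop :=
  ∀ φ : StrongDual ℝ V, Tendsto (fun i => φ (u i)) l (𝓝 (φ v))

theorem WeakTendsto.map {u : α → V} {l : Filter α} {v : V} (hu : WeakTendsto u l v)
    (f : V →L[ℝ] W) : WeakTendsto (fun i => f (u i)) l (f v) :=
  fun φ => hu (φ.comp f)

theorem IsCompactOperator.tendsto_of_weakTendsto {K : V →L[ℝ] W} (hK : IsCompactOperator K)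
    {U : Ultrafilter α} {u : α → V} {v : V} {R : ℝ} (hu : WeakTendsto u U v)
    (hR : ∀ᶠ i in U, ‖u i‖ ≤ R) : Tendsto (fun i => K (u i)) U (𝓝 (K v)) := by
  obtain ⟨C, hC, hKC⟩ :=
    hK.image_subset_compact_of_bounded (Metric.isBounded_closedBall (x := (0 : V)) (r := R))
  obtain ⟨w, -, hw⟩ := hC.ultrafilter_le_nhds (U.map fun i => K (u i)) <| by
    refine le_principal_iff.2 (hR.mono fun i hi => hKC ⟨u i, ?_, rfl⟩)
    simpa using hi
  suffices w = K v by rwa [← this]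
  exact SeparatingDual.eq_iff_forall_dual_eq.2 fun φ =>
    tendsto_nhds_unique ((φ.continuous.tendsto w).comp hw) (hu (φ.comp K))

theorem WeakTendsto.exists_tendsto_le_apply_self {l : Filter α} {u : α → V} {v : V}
    (hu : WeakTendsto u l v) (a : V →L[ℝ] V →L[ℝ] ℝ) (ha : ∀ w, 0 ≤ a w w) :
    ∃ r : α → ℝ, Tendsto r l (𝓝 (a v v)) ∧ ∀ i, r i ≤ a (u i) (u i) := by
  refine ⟨fun i => a (u i) v + a v (u i) - a v v, ?_, fun i => ?_⟩
  · simpa using ((hu (a.flip v)).add (hu (a v))).sub_const (a v v)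
  · have := ha (u i - v)
    simp only [map_sub, sub_apply] at this
    linarith

end Normed

section Inner

variable [InnerProductSpace ℝ V] [CompleteSpace V]

open InnerProductSpace in
theorem exists_weakTendsto_of_eventually_norm_le {U : Ultrafilter α} {u : α → V} {R : ℝ}
    (hR : ∀ᶠ i in U, ‖u i‖ ≤ R) : ∃ v, WeakTendsto u U v := by
  -- Banach–Alaoglu in the weak-* dual, transported back to `V` by the Riesz isometry
  obtain ⟨φ, -, hφ⟩ := (WeakDual.isCompact_closedBall (𝕜 := ℝ) (E := V) 0 R).ultrafilter_le_nhds
    (U.map fun i => StrongDual.toWeakDual (toDual ℝ V (u i))) <| by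
      refine le_principal_iff.2 (hR.mono fun i hi => ?_)
      simpa using hi
  refine ⟨(toDual ℝ V).symm (WeakDual.toStrongDual φ), fun ψ => ?_⟩
  obtain ⟨z, rfl⟩ := (toDual ℝ V).surjective ψ
  have := ((WeakDual.eval_continuous z).tendsto φ).comp hφ
  rw [toDual_apply_apply, real_inner_comm, toDual_symm_apply]
  refine this.congr fun i => ?_
  simp [toDual_apply_apply, real_inner_comm z]

theorem WeakTendsto.apply_of_isSymmetric {l : Filter α} {u : α → V} {v : V} {R : ℝ}
    (hu : WeakTendsto u l v) (hR : ∀ᶠ i in l, ‖u i‖ ≤ R) {P : α → V →ₗ[ℝ] V}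
    (hP : ∀ i, (P i).IsSymmetric) (hP_tendsto : ∀ g, Tendsto (fun i => P i g) l (𝓝 g)) :
    WeakTendsto (fun i => P i (u i)) l v := by
  intro ψ
  obtain ⟨z, rfl⟩ := (InnerProductSpace.toDual ℝ V).surjective ψ
  simp only [InnerProductSpace.toDual_apply_apply]
  have hsplit : ∀ i, ⟪z, P i (u i)⟫ = ⟪z, u i⟫ + ⟪P i z - z, u i⟫ := fun i => by
    rw [← hP i, inner_sub_left, add_sub_cancel]
  have herr : Tendsto (fun i => ⟪P i z - z, u i⟫) l (𝓝 0) := by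
    refine squeeze_zero_norm' (hR.mono fun i hi => ?_)
      (by simpa using (tendsto_iff_norm_sub_tendsto_zero.1 (hP_tendsto z)).mul_const R)
    exact (norm_inner_le_norm _ _).trans (by gcongr)
  simpa [hsplit] using (hu (innerSL ℝ z)).add herr

end Inner

end WeakTendsto

theorem LinearMap.isSymmetric_of_inner_sub_eq_zero {V : Type*} [NormedAddCommGroup V]
    [InnerProductSpace ℝ V] {W : Submodule ℝ V} {P : V →ₗ[ℝ] V} (hP_mem : ∀ v, P v ∈ W)
    (hP_orth : ∀ v, ∀ w ∈ W, ⟪v - P v, w⟫ = 0) : P.IsSymmetric := fun x y => by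
  have hx := hP_orth x (P y) (hP_mem y)
  have hy := hP_orth y (P x) (hP_mem x)
  rw [inner_sub_left] at hx hy
  linarith [real_inner_comm (P x) y, real_inner_comm (P x) (P y)]

theorem Filter.exists_ultrafilter_le_eventually_lt_of_liminf_lt {α : Type*} {l : Filter α}
    {f : α → ℝ} {c : ℝ} (hf : IsCoboundedUnder (· ≥ ·) l f) (hc : liminf f l < c) :
    ∃ U : Ultrafilter α, ↑U ≤ l ∧ ∀ᶠ i in U, f i < c := by
  have := frequently_iff_neBot.1 (frequently_lt_of_liminf_lt hf hc)
  obtain ⟨U, hU⟩ := Ultrafilter.exists_le (l ⊓ 𝓟 {i | f i < c})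
  exact ⟨U, hU.trans inf_le_left, le_principal_iff.1 (hU.trans inf_le_right)⟩

theorem exists_mem_norm_eq_one_lt_of_sInf_lt {V H : Type*} [NormedAddCommGroup V]
    [NormedSpace ℝ V] [NormedAddCommGroup H] [NormedSpace ℝ H] {ι : V →L[ℝ] H}
    (hι : Function.Injective ι) {S : Submodule ℝ V} (hS : S ≠ ⊥) {q : V → ℝ}
    (hq : ∀ (t : ℝ) v, q (t • v) = t ^ 2 * q v) {c : ℝ}
    (hc : sInf {x : ℝ | ∃ v : V, v ∈ S ∧ v ≠ 0 ∧ x = q v / ‖ι v‖ ^ 2} < c) :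
    ∃ u ∈ S, ‖ι u‖ = 1 ∧ q u < c := by
  obtain ⟨v₀, hv₀S, hv₀⟩ := Submodule.exists_mem_ne_zero_of_ne_bot hS
  obtain ⟨_, ⟨v, hvS, hv, rfl⟩, hvc⟩ := exists_lt_of_csInf_lt (by exact ⟨_, v₀, hv₀S, hv₀, rfl⟩) hc
  have hιv : ‖ι v‖ ≠ 0 := norm_ne_zero_iff.2 ((map_ne_zero_iff ι hι).2 hv)
  refine ⟨‖ι v‖⁻¹ • v, S.smul_mem _ hvS, ?_, ?_⟩
  · rw [map_smul, norm_smul, norm_inv, norm_norm, inv_mul_cancel₀ hιv]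
  · rwa [hq, inv_pow, inv_mul_eq_div]

theorem exists_norm_eq_one_and_le_of_eventually_le {α V H : Type*} [NormedAddCommGroup V]
    [InnerProductSpace ℝ V] [CompleteSpace V] [NormedAddCommGroup H] [NormedSpace ℝ H]
    {ι : V →L[ℝ] H} (hι : IsCompactOperator ι) {a0 a1 : V →L[ℝ] V →L[ℝ] ℝ} {κ : ℝ}
    (hκ : 0 < κ) (ha0 : ∀ v, κ * ‖v‖ ^ 2 ≤ a0 v v) (ha1 : ∀ v, 0 ≤ a1 v v) (T : V →L[ℝ] V)
    {U : Ultrafilter α} {P : α → V →ₗ[ℝ] V} (hP : ∀ i, (P i).IsSymmetric)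
    (hP_tendsto : ∀ g, Tendsto (fun i => P i g) U (𝓝 g)) {u : α → V} {c : ℝ}
    (hu : ∀ i, ‖ι (u i)‖ = 1)
    (hc : ∀ᶠ i in U, a0 (u i) (u i) + a1 (P i (T (u i))) (P i (T (u i))) ≤ c) :
    ∃ v, ‖ι v‖ = 1 ∧ a0 v v + a1 (T v) (T v) ≤ c := by
  have hu_bdd : ∀ᶠ i in U, ‖u i‖ ≤ √(c / κ) := hc.mono fun i hi => by
    refine Real.le_sqrt_of_sq_le ((le_div_iff₀' hκ).2 ?_)
    linarith [ha0 (u i), ha1 (P i (T (u i)))]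
  obtain ⟨v, hv⟩ := exists_weakTendsto_of_eventually_norm_le hu_bdd
  have hιv : ‖ι v‖ = 1 :=
    tendsto_nhds_unique (hι.tendsto_of_weakTendsto hv hu_bdd).norm (by simp [hu])
  have hTu_bdd : ∀ᶠ i in U, ‖T (u i)‖ ≤ ‖T‖ * √(c / κ) :=
    hu_bdd.mono fun i hi => T.le_opNorm_of_le hi
  have hPTu : WeakTendsto (fun i => P i (T (u i))) U (T v) :=
    (hv.map T).apply_of_isSymmetric hTu_bdd hP hP_tendsto
  obtain ⟨r0, hr0, hr0_le⟩ := hv.exists_tendsto_le_apply_self a0 fun w =>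
    le_trans (by positivity) (ha0 w)
  obtain ⟨r1, hr1, hr1_le⟩ := hPTu.exists_tendsto_le_apply_self a1 ha1
  exact ⟨v, hιv, le_of_tendsto (hr0.add hr1)
    (hc.mono fun i hi => (add_le_add (hr0_le i) (hr1_le i)).trans hi)⟩

theorem to_ritz_lower_bound_galerkin_general
    {V H : Type*}
    [NormedAddCommGroup V] [InnerProductSpace ℝ V] [CompleteSpace V]
    [NormedAddCommGroup H] [InnerProductSpace ℝ H]
    (ι : V →L[ℝ] H) (hι_inj : Function.Injective ι)
    (hι_cpt : IsCompactOperator ι)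
    (a0 a1 : V →ₗ[ℝ] V →ₗ[ℝ] ℝ)
    (M : ℝ)
    (ha0_bdd : ∀ u v : V, |a0 u v| ≤ M * ‖u‖ * ‖v‖)
    (ha1_bdd : ∀ u v : V, |a1 u v| ≤ M * ‖u‖ * ‖v‖)
    (α : ℝ) (hα : 0 < α)
    (ha0_coer : ∀ v : V, α * ‖v‖ ^ 2 ≤ a0 v v)
    (ha1_coer : ∀ v : V, α * ‖v‖ ^ 2 ≤ a1 v v)
    (T : V →ₗ[ℝ] V) (CV : ℝ)
    (hT_bdd : ∀ v : V, ‖T v‖ ≤ CV * ‖v‖)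
    (S : ℕ → Submodule ℝ V) (hS_mono : Monotone S)
    (hS_ne : ∀ n, S n ≠ ⊥)
    (lam1 : ℝ)
    (hlam1 : lam1 = sInf {x : ℝ | ∃ v : V, v ≠ 0 ∧
      x = ((a0 v v + a1 (T v) (T v)) / 2) / ‖ι v‖ ^ 2})
    (I : ℕ → V →ₗ[ℝ] V)
    (lamT : ℕ → ℝ)
    (hlamT : ∀ n, lamT n = sInf {x : ℝ | ∃ v : V, v ∈ S n ∧ v ≠ 0 ∧
      x = ((a0 v v + a1 (I n (T v)) (I n (T v))) / 2) / ‖ι v‖ ^ 2})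
    -- each `I n` is the orthogonal projection onto a closed subspace `W n ⊆ V`
    (W : ℕ → Submodule ℝ V)
    (hI_mem : ∀ n (v : V), I n v ∈ W n)
    (hI_orth : ∀ n (v : V), ∀ w ∈ W n, ⟪v - I n v, w⟫ = 0)
    -- `I n f → f` in `V` for every `f ∈ V` (in particular Condition (ii) holds)
    (hI_tendsto : ∀ f : V, Tendsto (fun n => ‖I n f - f‖) atTop (𝓝 0))
    :
    lam1 ≤ liminf lamT atTop := by
  have ha1_nonneg (v : V) : 0 ≤ a1 v v := le_trans (by positivity) (ha1_coer v)
  have hq_nonneg (v w : V) : 0 ≤ ((a0 v v + a1 w w) / 2) / ‖ι v‖ ^ 2 := by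
    have : 0 ≤ a0 v v := le_trans (by positivity) (ha0_coer v)
    have := ha1_nonneg w
    positivity
  have hI_lim (g : V) : Tendsto (fun n => I n g) atTop (𝓝 g) :=
    tendsto_iff_norm_sub_tendsto_zero.2 (hI_tendsto g)
  let A1 := a1.mkContinuous₂ M ha1_bdd
  have hlamT_bdd : IsBoundedUnder (· ≤ ·) atTop lamT := by
    obtain ⟨f, hf, hf0⟩ := Submodule.exists_mem_ne_zero_of_ne_bot (hS_ne 0)
    have hA1 : Continuous fun w => A1 w w := by fun_prop
    have hlim := ((((hA1.tendsto _).comp (hI_lim (T f))).const_add (a0 f f)).div_const 2).div_const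
      (‖ι f‖ ^ 2)
    refine hlim.isBoundedUnder_le.mono_le (Eventually.of_forall fun n => ?_)
    rw [hlamT n]
    exact csInf_le ⟨0, by rintro _ ⟨v, -, -, rfl⟩; exact hq_nonneg _ _⟩
      ⟨f, hS_mono (Nat.zero_le n) hf, hf0, rfl⟩
  refine le_of_forall_pos_le_add fun ε hε => ?_
  obtain ⟨U, hU, hU_lt⟩ := exists_ultrafilter_le_eventually_lt_of_liminf_lt
    hlamT_bdd.isCoboundedUnder_ge (lt_add_of_pos_right _ (half_pos hε))
  choose u _ hu1 hu_lt using fun n => exists_mem_norm_eq_one_lt_of_sInf_lt hι_inj (hS_ne n)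
    (q := fun v => (a0 v v + a1 (I n (T v)) (I n (T v))) / 2) (fun t v => by simp; ring)
    ((hlamT n).symm.trans_lt (lt_add_of_pos_right _ (half_pos hε)))
  obtain ⟨v, hv1, hv⟩ := exists_norm_eq_one_and_le_of_eventually_le hι_cpt hα ha0_coer
    (a0 := a0.mkContinuous₂ M ha0_bdd) (a1 := A1) ha1_nonneg (T.mkContinuous CV hT_bdd)
    (fun n => LinearMap.isSymmetric_of_inner_sub_eq_zero (hI_mem n) (hI_orth n))
    (fun g => (hI_lim g).mono_left hU) hu1 (c := 2 * (liminf lamT atTop + ε))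
    (hU_lt.mono fun n hn => show a0 (u n) (u n) + a1 (I n (T (u n))) (I n (T (u n))) ≤ _ by
       linarith [hu_lt n])
  change a0 v v + a1 (T v) (T v) ≤ _ at hv
  have hv0 : v ≠ 0 := by rintro rfl; simp at hv1
  calc lam1 ≤ ((a0 v v + a1 (T v) (T v)) / 2) / ‖ι v‖ ^ 2 :=
        hlam1 ▸ csInf_le ⟨0, by rintro _ ⟨w, -, rfl⟩; exact hq_nonneg _ _⟩ ⟨v, hv0, rfl⟩
    _ ≤ liminf lamT atTop + ε := by
        rw [hv1]
        linarith

/-- **Lower bound for the first Ritz values in the H¹-Galerkin case.**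
If each `I n` is the orthogonal projection of `V` onto a closed subspace `W n`
and `I n f → f` for every `f ∈ V` (so Condition (ii) holds), then
`liminf λ̃ₙ ≥ λ₁`, without assuming Condition (iii). -/
theorem to_ritz_lower_bound_galerkin
    {V H : Type*}
    [NormedAddCommGroup V] [InnerProductSpace ℝ V] [CompleteSpace V]
    [NormedAddCommGroup H] [InnerProductSpace ℝ H] [CompleteSpace H]
    (ι : V →L[ℝ] H) (hι_inj : Function.Injective ι)
    (hι_cpt : IsCompactOperator ι)
    (a0 a1 : V →ₗ[ℝ] V →ₗ[ℝ] ℝ)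
    (ha0_symm : ∀ u v : V, a0 u v = a0 v u)
    (ha1_symm : ∀ u v : V, a1 u v = a1 v u)
    (M : ℝ)
    (ha0_bdd : ∀ u v : V, |a0 u v| ≤ M * ‖u‖ * ‖v‖)
    (ha1_bdd : ∀ u v : V, |a1 u v| ≤ M * ‖u‖ * ‖v‖)
    (α : ℝ) (hα : 0 < α)
    (ha0_coer : ∀ v : V, α * ‖v‖ ^ 2 ≤ a0 v v)
    (ha1_coer : ∀ v : V, α * ‖v‖ ^ 2 ≤ a1 v v)
    (T : V →ₗ[ℝ] V) (CV CT : ℝ)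
    (hT_bdd : ∀ v : V, ‖T v‖ ≤ CV * ‖v‖)
    (hT_H : ∀ v : V, ‖ι (T v)‖ ≤ CT * ‖ι v‖)
    (S : ℕ → Submodule ℝ V) (hS_mono : Monotone S)
    (hS_ne : ∀ n, S n ≠ ⊥) (hS_fd : ∀ n, FiniteDimensional ℝ (S n))
    (lam1 : ℝ)
    (hlam1 : lam1 = sInf {x : ℝ | ∃ v : V, v ≠ 0 ∧
      x = ((a0 v v + a1 (T v) (T v)) / 2) / ‖ι v‖ ^ 2})
    (hdensity : sInf {x : ℝ | ∃ v : V, (∃ n, v ∈ S n) ∧ v ≠ 0 ∧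
      x = ((a0 v v + a1 (T v) (T v)) / 2) / ‖ι v‖ ^ 2} = lam1)
    (I : ℕ → V →ₗ[ℝ] V)
    (lamT : ℕ → ℝ)
    (hlamT : ∀ n, lamT n = sInf {x : ℝ | ∃ v : V, v ∈ S n ∧ v ≠ 0 ∧
      x = ((a0 v v + a1 (I n (T v)) (I n (T v))) / 2) / ‖ι v‖ ^ 2})
    -- each `I n` is the orthogonal projection onto a closed subspace `W n ⊆ V`
    (W : ℕ → Submodule ℝ V) (hW_closed : ∀ n, IsClosed (W n : Set V))
    (hI_mem : ∀ n (v : V), I n v ∈ W n)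
    (hI_orth : ∀ n (v : V), ∀ w ∈ W n, ⟪v - I n v, w⟫ = 0)
    -- `I n f → f` in `V` for every `f ∈ V` (in particular Condition (ii) holds)
    (hI_tendsto : ∀ f : V, Tendsto (fun n => ‖I n f - f‖) atTop (𝓝 0))
    :
    lam1 ≤ liminf lamT atTop :=
  to_ritz_lower_bound_galerkin_general ι hι_inj hι_cpt a0 a1 M ha0_bdd ha1_bdd α hα ha0_coer
    ha1_coer T CV hT_bdd S hS_mono hS_ne lam1 hlam1 I lamT hlamT W hI_mem hI_orth hI_tendsto
end

section
/- Assume Condition (ii) (H¹-convergence) and Condition (iii) (L²-stability). Then the first Ritz values of the discretised forms converge to the first eigenvalue: λ̃_n → λ₁ as n → ∞. -/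
/-!
Upper bound: by density some `v ∈ Sₘ` has Rayleigh quotient below `λ₁ + ε`, and by (ii) its
discrete quotient converges to the continuous one, so `λ̃ₙ < λ₁ + ε` for large `n`.

Lower bound: if `λ̃ₙ ≤ c < λ₁` frequently, take near-minimisers `vₙ ∈ Sₙ` with `‖ι vₙ‖ = 1` along an
ultrafilter. Coercivity bounds `vₙ` and `wₙ = Iₙ(T vₙ)` in `V`, so they have weak limits `z` and `w`,
and compactness of `ι` gives `ι vₙ → ι z`, hence `‖ι z‖ = 1`. Approximating `z` from `⋃ Sₘ` and using
(ii) and (iii) shows `ι wₙ → ι (T z)`, so `w = T z`. Weak lower semicontinuity of the two quadratic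
forms then gives `λ₁ ≤ a(z, z) ≤ c`.
-/

open Filter Topology
open scoped RealInnerProductSpace

section WeakConvergence

variable {α E F : Type*} [NormedAddCommGroup E] [NormedSpace ℝ E]

open InnerProductSpace in
theorem Ultrafilter.exists_forall_tendsto_dual_of_eventually_norm_le
    {V : Type*} [NormedAddCommGroup V] [InnerProductSpace ℝ V] [CompleteSpace V]
    (𝒰 : Ultrafilter α) {v : α → V} {R : ℝ} (hv : ∀ᶠ n in 𝒰, ‖v n‖ ≤ R) :
    ∃ z : V, ∀ φ : StrongDual ℝ V, Tendsto (fun n => φ (v n)) 𝒰 (𝓝 (φ z)) := by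
  let e : V → WeakDual ℝ V := fun x => StrongDual.toWeakDual (toDual ℝ V x)
  -- Banach–Alaoglu in the dual, transported back by the Riesz isomorphism
  obtain ⟨ψ, -, hψ⟩ := (WeakDual.isCompact_closedBall (0 : StrongDual ℝ V) R).ultrafilter_le_nhds
    (𝒰.map (e ∘ v)) (le_principal_iff.2 <| hv.mono fun n hn => by simpa [e] using hn)
  refine ⟨(toDual ℝ V).symm (WeakDual.toStrongDual ψ), fun φ => ?_⟩
  have h := ((WeakDual.eval_continuous ((toDual ℝ V).symm φ)).tendsto ψ).comp hψ
  convert h using 2 with n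
  · show φ (v n) = ⟪v n, (toDual ℝ V).symm φ⟫
    rw [real_inner_comm, toDual_symm_apply]
  · rw [← toDual_symm_apply (y := φ), real_inner_comm, toDual_symm_apply]
    rfl

theorem Submodule.mem_topologicalClosure_of_tendsto_dual
    {V : Type*} [NormedAddCommGroup V] [InnerProductSpace ℝ V] [CompleteSpace V]
    {l : Filter α} [l.NeBot] (K : Submodule ℝ V) {v : α → V} {z : V}
    (hK : ∀ᶠ n in l, v n ∈ K)
    (hv : ∀ φ : StrongDual ℝ V, Tendsto (fun n => φ (v n)) l (𝓝 (φ z))) :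
    z ∈ K.topologicalClosure := by
  rw [← K.orthogonal_orthogonal_eq_closure, Submodule.mem_orthogonal]
  intro u hu
  refine tendsto_nhds_unique (hv (innerSL ℝ u)) (tendsto_const_nhds.congr' ?_)
  filter_upwards [hK] with n hn
  exact (K.inner_left_of_mem_orthogonal hn hu).symm

theorem IsCompactOperator.tendsto_of_tendsto_dual [NormedAddCommGroup F] [NormedSpace ℝ F]
    {f : E →L[ℝ] F} (hf : IsCompactOperator f) (𝒰 : Ultrafilter α) {v : α → E} {z : E} {R : ℝ}
    (hvR : ∀ᶠ n in 𝒰, ‖v n‖ ≤ R)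
    (hv : ∀ φ : StrongDual ℝ E, Tendsto (fun n => φ (v n)) 𝒰 (𝓝 (φ z))) :
    Tendsto (fun n => f (v n)) 𝒰 (𝓝 (f z)) := by
  obtain ⟨g, -, hg⟩ := (hf.isCompact_closure_image_closedBall R).ultrafilter_le_nhds
    (𝒰.map (f ∘ v)) <| le_principal_iff.2 <| hvR.mono fun n hn =>
      subset_closure ⟨v n, by simpa using hn, rfl⟩
  have hgz : f z = g := (SeparatingDual.eq_iff_forall_dual_eq (R := ℝ)).2 fun ψ =>
    tendsto_nhds_unique (hv (ψ.comp f)) ((ψ.continuous.tendsto g).comp hg)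
  exact hgz ▸ hg

theorem ContinuousLinearMap.eventually_lt_apply_self_of_tendsto_dual {l : Filter α}
    (B : E →L[ℝ] E →L[ℝ] ℝ) (hB : ∀ u, 0 ≤ B u u) {v : α → E} {z : E}
    (hv : ∀ φ : StrongDual ℝ E, Tendsto (fun n => φ (v n)) l (𝓝 (φ z)))
    {c : ℝ} (hc : c < B z z) : ∀ᶠ n in l, c < B (v n) (v n) := by
  have hlower : ∀ n, B (v n) z + B z (v n) - B z z ≤ B (v n) (v n) := fun n => by
    have := hB (v n - z)
    simp only [map_sub, sub_apply] at this
    linarith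
  have hlim : Tendsto (fun n => B (v n) z + B z (v n) - B z z) l (𝓝 (B z z)) := by
    simpa using ((hv (B.flip z)).add (hv (B z))).sub_const (B z z)
  exact (hlim.eventually_const_lt hc).mono fun n hn => hn.trans_le (hlower n)

end WeakConvergence

section Rayleigh

variable {V H : Type*} [NormedAddCommGroup V] [NormedSpace ℝ V]
  [NormedAddCommGroup H] [NormedSpace ℝ H]

noncomputable def rayleighInf (ι : V →L[ℝ] H) (q : V → ℝ) (p : V → Prop) : ℝ :=
  sInf {x : ℝ | ∃ v : V, p v ∧ v ≠ 0 ∧ x = q v / ‖ι v‖ ^ 2}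

variable {ι : V →L[ℝ] H} {q : V → ℝ} {p : V → Prop}

theorem rayleighInf_le (hq : ∀ v, 0 ≤ q v) {v : V} (hp : p v) (hv : v ≠ 0) :
    rayleighInf ι q p ≤ q v / ‖ι v‖ ^ 2 :=
  csInf_le ⟨0, by rintro x ⟨u, -, -, rfl⟩; exact div_nonneg (hq u) (sq_nonneg _)⟩ ⟨v, hp, hv, rfl⟩

theorem rayleighInf_le_of_norm_eq_one (hq : ∀ v, 0 ≤ q v) {v : V} (hp : p v)
    (hv : ‖ι v‖ = 1) : rayleighInf ι q p ≤ q v := by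
  have hv0 : v ≠ 0 := by
    rintro rfl
    simp at hv
  simpa [hv] using rayleighInf_le (ι := ι) hq hp hv0

theorem exists_lt_of_rayleighInf_lt (hp : ∃ v, p v ∧ v ≠ 0) {c : ℝ}
    (hc : rayleighInf ι q p < c) : ∃ v, p v ∧ v ≠ 0 ∧ q v / ‖ι v‖ ^ 2 < c := by
  obtain ⟨v, hpv, hv⟩ := hp
  obtain ⟨_, ⟨u, hpu, hu, rfl⟩, hlt⟩ :=
    exists_lt_of_csInf_lt (s := {x : ℝ | ∃ v : V, p v ∧ v ≠ 0 ∧ x = q v / ‖ι v‖ ^ 2})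
      ⟨_, v, hpv, hv, rfl⟩ hc
  exact ⟨u, hpu, hu, hlt⟩

theorem exists_norm_eq_one_lt_of_rayleighInf_lt (hι : Function.Injective ι)
    (hq : ∀ (t : ℝ) v, q (t • v) = t ^ 2 * q v) (K : Submodule ℝ V) (hK : K ≠ ⊥) {c : ℝ}
    (hc : rayleighInf ι q (· ∈ K) < c) : ∃ v ∈ K, ‖ι v‖ = 1 ∧ q v < c := by
  obtain ⟨v, hvK, hv, hlt⟩ := exists_lt_of_rayleighInf_lt (K.ne_bot_iff.1 hK) hc
  have hιv : ‖ι v‖ ≠ 0 := by simpa using (map_ne_zero_iff ι hι).2 hv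
  refine ⟨‖ι v‖⁻¹ • v, K.smul_mem _ hvK, ?_, ?_⟩
  · rw [map_smul, norm_smul, norm_inv, norm_norm, inv_mul_cancel₀ hιv]
  · rwa [hq, inv_pow, inv_mul_eq_div]

theorem eventually_rayleighInf_lt {Q : ℕ → V → ℝ} (hQ : ∀ n v, 0 ≤ Q n v)
    {S : ℕ → Submodule ℝ V} (hS : Monotone S) (hS₀ : ∃ v, (∃ n, v ∈ S n) ∧ v ≠ 0)
    (hlim : ∀ v, (∃ m, v ∈ S m) → Tendsto (fun n => Q n v) atTop (𝓝 (q v)))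
    {c : ℝ} (hc : rayleighInf ι q (fun v => ∃ n, v ∈ S n) < c) :
    ∀ᶠ n in atTop, rayleighInf ι (Q n) (· ∈ S n) < c := by
  obtain ⟨v, ⟨m, hvm⟩, hv, hvc⟩ := exists_lt_of_rayleighInf_lt hS₀ hc
  have hvlim := ((hlim v ⟨m, hvm⟩).div_const (‖ι v‖ ^ 2)).eventually_lt_const hvc
  filter_upwards [hvlim, eventually_ge_atTop m] with n hn hmn
  exact (rayleighInf_le (hQ n) (hS hmn hvm) hv).trans_lt hn

theorem eventually_lt_rayleighInf (hι : Function.Injective ι) {Q : ℕ → V → ℝ}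
    (hQ : ∀ n (t : ℝ) v, Q n (t • v) = t ^ 2 * Q n v) {S : ℕ → Submodule ℝ V}
    (hS : ∀ n, S n ≠ ⊥) {lam : ℝ}
    (hlim : ∀ (𝒰 : Ultrafilter ℕ), (𝒰 : Filter ℕ) ≤ atTop → ∀ (v : ℕ → V) (c : ℝ),
      (∀ᶠ n in 𝒰, v n ∈ S n ∧ ‖ι (v n)‖ = 1 ∧ Q n (v n) ≤ c) → lam ≤ c)
    {c : ℝ} (hc : c < lam) : ∀ᶠ n in atTop, c < rayleighInf ι (Q n) (· ∈ S n) := by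
  by_contra hnot
  obtain ⟨c', hcc', hc'⟩ := exists_between hc
  have := frequently_iff_neBot.1 (not_eventually.1 hnot)
  obtain ⟨𝒰, h𝒰⟩ := Ultrafilter.exists_le (atTop ⊓ 𝓟 {n | ¬c < rayleighInf ι (Q n) (· ∈ S n)})
  have hbad : ∀ᶠ n in 𝒰, ¬c < rayleighInf ι (Q n) (· ∈ S n) :=
    le_principal_iff.1 (h𝒰.trans inf_le_right)
  have hmin : ∀ᶠ n in 𝒰, ∃ v ∈ S n, ‖ι v‖ = 1 ∧ Q n v < c' := hbad.mono fun n hn =>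
    exists_norm_eq_one_lt_of_rayleighInf_lt hι (hQ n) (S n) (hS n) ((not_lt.1 hn).trans_lt hcc')
  obtain ⟨v, hv⟩ := hmin.choice
  have := hlim 𝒰 (h𝒰.trans inf_le_left) v c' (hv.mono fun n ⟨hvS, hv1, hvc⟩ => ⟨hvS, hv1, hvc.le⟩)
  linarith

end Rayleigh

theorem eq_of_tendsto_interpolant {E F : Type*} [NormedAddCommGroup E] [NormedSpace ℝ E]
    [NormedAddCommGroup F] [NormedSpace ℝ F] (ι : E →L[ℝ] F) (T : E →ₗ[ℝ] E)
    (hT : Continuous T) (S : ℕ → Submodule ℝ E) (hS : Monotone S) (I : ℕ → E →ₗ[ℝ] E)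
    (hii : ∀ f : E, (∃ m, f ∈ S m) → Tendsto (fun n => ‖I n (T f) - T f‖) atTop (𝓝 0))
    (C : ℝ) (hiii : ∀ n, ∀ v ∈ S n, ‖ι (I n (T v))‖ ≤ C * ‖ι v‖)
    {l : Filter ℕ} [l.NeBot] (hl : l ≤ atTop) {v : ℕ → E} {z : E} {g : F}
    (hz : z ∈ closure (⋃ n, (S n : Set E))) (hvS : ∀ᶠ n in l, v n ∈ S n)
    (hv : Tendsto (fun n => ι (v n)) l (𝓝 (ι z)))
    (hg : Tendsto (fun n => ι (I n (T (v n)))) l (𝓝 g)) : g = ι (T z) := by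
  -- `bound` is continuous and vanishes at `z`, which lies in the closure of `⋃ Sₙ`
  let bound : E → ℝ := fun f => C * ‖ι (z - f)‖ + ‖ι (T (f - z))‖
  have hbound : ∀ f ∈ ⋃ n, (S n : Set E), ‖g - ι (T z)‖ ≤ bound f := by
    intro f hf
    obtain ⟨m, hfm⟩ := Set.mem_iUnion.1 hf
    have hlim : Tendsto (fun n => C * ‖ι (v n - f)‖ + ‖ι‖ * ‖I n (T f) - T f‖
        + ‖ι (T (f - z))‖) l (𝓝 (bound f)) := by
      have h := (((hv.sub_const (ι f)).norm.const_mul C).add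
        (((hii f ⟨m, hfm⟩).mono_left hl).const_mul ‖ι‖)).add_const ‖ι (T (f - z))‖
      simpa [bound] using h
    refine le_of_tendsto_of_tendsto (hg.sub_const _).norm hlim ?_
    filter_upwards [hvS, hl (eventually_ge_atTop m)] with n hvn hmn
    have hsplit : ι (I n (T (v n))) - ι (T z)
        = ι (I n (T (v n - f))) + ι (I n (T f) - T f) + ι (T (f - z)) := by
      simp only [map_sub]
      abel
    rw [hsplit]
    refine (norm_add₃_le ..).trans (add_le_add_three ?_ (ι.le_opNorm _) le_rfl)
    exact hiii n _ (sub_mem hvn (hS hmn hfm))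
  have hclosed : IsClosed {f | ‖g - ι (T z)‖ ≤ bound f} :=
    isClosed_le continuous_const (by fun_prop)
  have hz_bound : ‖g - ι (T z)‖ ≤ bound z := closure_minimal hbound hclosed hz
  simpa [bound, sub_eq_zero] using hz_bound

theorem exists_energy_le_of_eventually_energy_le
    {V H : Type*} [NormedAddCommGroup V] [InnerProductSpace ℝ V] [CompleteSpace V]
    [NormedAddCommGroup H] [NormedSpace ℝ H]
    (ι : V →L[ℝ] H) (hι_inj : Function.Injective ι) (hι_cpt : IsCompactOperator ι)
    (A0 A1 : V →L[ℝ] V →L[ℝ] ℝ) {α : ℝ} (hα : 0 < α)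
    (hA0 : ∀ v, α * ‖v‖ ^ 2 ≤ A0 v v) (hA1 : ∀ v, α * ‖v‖ ^ 2 ≤ A1 v v)
    (T : V →ₗ[ℝ] V) (hT : Continuous T) (S : ℕ → Submodule ℝ V) (hS : Monotone S)
    (I : ℕ → V →ₗ[ℝ] V)
    (hii : ∀ f : V, (∃ m, f ∈ S m) → Tendsto (fun n => ‖I n (T f) - T f‖) atTop (𝓝 0))
    (C : ℝ) (hiii : ∀ n, ∀ v ∈ S n, ‖ι (I n (T v))‖ ≤ C * ‖ι v‖)
    (𝒰 : Ultrafilter ℕ) (h𝒰 : (𝒰 : Filter ℕ) ≤ atTop) {v : ℕ → V} {c : ℝ}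
    (hv : ∀ᶠ n in 𝒰, v n ∈ S n ∧ ‖ι (v n)‖ = 1 ∧
      (A0 (v n) (v n) + A1 (I n (T (v n))) (I n (T (v n)))) / 2 ≤ c) :
    ∃ z, ‖ι z‖ = 1 ∧ (A0 z z + A1 (T z) (T z)) / 2 ≤ c := by
  set w : ℕ → V := fun n => I n (T (v n))
  have hpos : ∀ (A : V →L[ℝ] V →L[ℝ] ℝ), (∀ v, α * ‖v‖ ^ 2 ≤ A v v) → ∀ v, 0 ≤ A v v :=
    fun A hA v => (mul_nonneg hα.le (sq_nonneg _)).trans (hA v)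
  have hbdd : ∀ᶠ n in 𝒰, ‖v n‖ ≤ √(2 * c / α) ∧ ‖w n‖ ≤ √(2 * c / α) := by
    filter_upwards [hv] with n hn
    obtain ⟨-, -, hn⟩ := hn
    have hvn : α * ‖v n‖ ^ 2 ≤ 2 * c := by linarith [hA0 (v n), hpos A1 hA1 (w n)]
    have hwn : α * ‖w n‖ ^ 2 ≤ 2 * c := by linarith [hA1 (w n), hpos A0 hA0 (v n)]
    exact ⟨Real.le_sqrt_of_sq_le ((le_div_iff₀' hα).2 hvn),
      Real.le_sqrt_of_sq_le ((le_div_iff₀' hα).2 hwn)⟩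
  have hvR := hbdd.mono fun _ h => h.1
  have hwR := hbdd.mono fun _ h => h.2
  obtain ⟨z, hz⟩ := 𝒰.exists_forall_tendsto_dual_of_eventually_norm_le hvR
  obtain ⟨y, hy⟩ := 𝒰.exists_forall_tendsto_dual_of_eventually_norm_le hwR
  have hιz := hι_cpt.tendsto_of_tendsto_dual 𝒰 hvR hz
  have hz1 : ‖ι z‖ = 1 :=
    tendsto_nhds_unique hιz.norm (tendsto_const_nhds.congr' (hv.mono fun _ h => h.2.1.symm))
  have hzS : z ∈ closure (⋃ n, (S n : Set V)) := by
    rw [← Submodule.coe_iSup_of_directed S hS.directed_le, ← Submodule.topologicalClosure_coe]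
    exact (⨆ n, S n).mem_topologicalClosure_of_tendsto_dual
      (hv.mono fun n h => Submodule.mem_iSup_of_mem n h.1) hz
  have hyz : y = T z := hι_inj <| eq_of_tendsto_interpolant ι T hT S hS I hii C hiii h𝒰 hzS
    (hv.mono fun _ h => h.1) hιz (hι_cpt.tendsto_of_tendsto_dual 𝒰 hwR hy)
  refine ⟨z, hz1, le_of_forall_pos_lt_add fun ε hε => ?_⟩
  have h0 := A0.eventually_lt_apply_self_of_tendsto_dual (hpos A0 hA0) hz
    (c := A0 z z - ε) (by linarith)
  have h1 := A1.eventually_lt_apply_self_of_tendsto_dual (hpos A1 hA1) hy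
    (c := A1 y y - ε) (by linarith)
  obtain ⟨n, ⟨-, -, hn⟩, h0n, h1n⟩ := (hv.and (h0.and h1)).exists
  rw [hyz] at h1n
  linarith

theorem to_ritz_value_convergence_general
    {V H : Type*}
    [NormedAddCommGroup V] [InnerProductSpace ℝ V] [CompleteSpace V]
    [NormedAddCommGroup H] [InnerProductSpace ℝ H]
    (ι : V →L[ℝ] H) (hι_inj : Function.Injective ι)
    (hι_cpt : IsCompactOperator ι)
    (a0 a1 : V →ₗ[ℝ] V →ₗ[ℝ] ℝ)
    (M : ℝ)
    (ha0_bdd : ∀ u v : V, |a0 u v| ≤ M * ‖u‖ * ‖v‖)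
    (ha1_bdd : ∀ u v : V, |a1 u v| ≤ M * ‖u‖ * ‖v‖)
    (α : ℝ) (hα : 0 < α)
    (ha0_coer : ∀ v : V, α * ‖v‖ ^ 2 ≤ a0 v v)
    (ha1_coer : ∀ v : V, α * ‖v‖ ^ 2 ≤ a1 v v)
    (T : V →ₗ[ℝ] V) (CV : ℝ)
    (hT_bdd : ∀ v : V, ‖T v‖ ≤ CV * ‖v‖)
    (S : ℕ → Submodule ℝ V) (hS_mono : Monotone S)
    (hS_ne : ∀ n, S n ≠ ⊥)
    (lam1 : ℝ)
    (hlam1 : lam1 = sInf {x : ℝ | ∃ v : V, v ≠ 0 ∧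
      x = ((a0 v v + a1 (T v) (T v)) / 2) / ‖ι v‖ ^ 2})
    (hdensity : sInf {x : ℝ | ∃ v : V, (∃ n, v ∈ S n) ∧ v ≠ 0 ∧
      x = ((a0 v v + a1 (T v) (T v)) / 2) / ‖ι v‖ ^ 2} = lam1)
    (I : ℕ → V →ₗ[ℝ] V)
    (lamT : ℕ → ℝ)
    (hlamT : ∀ n, lamT n = sInf {x : ℝ | ∃ v : V, v ∈ S n ∧ v ≠ 0 ∧
      x = ((a0 v v + a1 (I n (T v)) (I n (T v))) / 2) / ‖ι v‖ ^ 2})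
    -- Condition (ii): H¹-convergence of the interpolated transfer operator
    (hii : ∀ f : V, (∃ m, f ∈ S m) →
      Tendsto (fun n => ‖I n (T f) - T f‖) atTop (𝓝 0))
    -- Condition (iii): L²-stability
    (C : ℝ)
    (hiii : ∀ m : ℕ, ∀ n ≥ m, ∀ v ∈ S m, ‖ι (I n (T v))‖ ≤ C * ‖ι v‖)
    :
    Tendsto lamT atTop (𝓝 lam1) := by
  let A0 := a0.mkContinuous₂ M fun u v => by simpa only [Real.norm_eq_abs] using ha0_bdd u v
  let A1 := a1.mkContinuous₂ M fun u v => by simpa only [Real.norm_eq_abs] using ha1_bdd u v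
  let q : V → ℝ := fun v => (a0 v v + a1 (T v) (T v)) / 2
  let Q : ℕ → V → ℝ := fun n v => (a0 v v + a1 (I n (T v)) (I n (T v))) / 2
  have ha_nonneg : ∀ u, 0 ≤ a0 u u ∧ 0 ≤ a1 u u := fun u =>
    ⟨(mul_nonneg hα.le (sq_nonneg ‖u‖)).trans (ha0_coer u),
      (mul_nonneg hα.le (sq_nonneg ‖u‖)).trans (ha1_coer u)⟩
  have hq_nonneg : ∀ v, 0 ≤ q v := fun v =>
    div_nonneg (add_nonneg (ha_nonneg v).1 (ha_nonneg (T v)).2) zero_le_two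
  have hQ_nonneg : ∀ n v, 0 ≤ Q n v := fun n v =>
    div_nonneg (add_nonneg (ha_nonneg v).1 (ha_nonneg (I n (T v))).2) zero_le_two
  have hlam1' : lam1 = rayleighInf ι q fun _ => True := by
    simp only [hlam1, rayleighInf, true_and]
    rfl
  have hdensity' : rayleighInf ι q (fun v => ∃ n, v ∈ S n) = lam1 := hdensity
  have hlamT' : lamT = fun n => rayleighInf ι (Q n) (· ∈ S n) := funext hlamT
  rw [hlamT']
  refine tendsto_order.2 ⟨fun c hc => ?_, fun c hc => ?_⟩
  · refine eventually_lt_rayleighInf hι_inj (fun n t v => ?_) hS_ne (fun 𝒰 h𝒰 v c hv => ?_) hc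
    · simp only [Q, map_smul, LinearMap.smul_apply, smul_eq_mul]
      ring
    obtain ⟨z, hz1, hz⟩ := exists_energy_le_of_eventually_energy_le ι hι_inj hι_cpt A0 A1 hα
      ha0_coer ha1_coer T (AddMonoidHomClass.continuous_of_bound T CV hT_bdd) S hS_mono I hii C
      (fun n => hiii n n le_rfl) 𝒰 h𝒰 hv
    exact hlam1' ▸ (rayleighInf_le_of_norm_eq_one hq_nonneg trivial hz1).trans hz
  · refine eventually_rayleighInf_lt hQ_nonneg hS_mono ?_ (fun v ⟨m, hvm⟩ => ?_) (hdensity' ▸ hc)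
    · obtain ⟨v, hv, hv0⟩ := (S 0).ne_bot_iff.1 (hS_ne 0)
      exact ⟨v, ⟨0, hv⟩, hv0⟩
    have hIT := tendsto_iff_norm_sub_tendsto_zero.2 (hii v ⟨m, hvm⟩)
    exact (((A1.continuous₂.tendsto (T v, T v)).comp (hIT.prodMk_nhds hIT)).const_add
      (a0 v v)).div_const 2

/-- **Convergence of the first Ritz values.**  Under Condition (ii)
(H¹-convergence) and Condition (iii) (L²-stability), `λ̃ₙ → λ₁`. -/
theorem to_ritz_value_convergence
    {V H : Type*}
    [NormedAddCommGroup V] [InnerProductSpace ℝ V] [CompleteSpace V]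
    [NormedAddCommGroup H] [InnerProductSpace ℝ H] [CompleteSpace H]
    (ι : V →L[ℝ] H) (hι_inj : Function.Injective ι)
    (hι_cpt : IsCompactOperator ι)
    (a0 a1 : V →ₗ[ℝ] V →ₗ[ℝ] ℝ)
    (ha0_symm : ∀ u v : V, a0 u v = a0 v u)
    (ha1_symm : ∀ u v : V, a1 u v = a1 v u)
    (M : ℝ)
    (ha0_bdd : ∀ u v : V, |a0 u v| ≤ M * ‖u‖ * ‖v‖)
    (ha1_bdd : ∀ u v : V, |a1 u v| ≤ M * ‖u‖ * ‖v‖)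
    (α : ℝ) (hα : 0 < α)
    (ha0_coer : ∀ v : V, α * ‖v‖ ^ 2 ≤ a0 v v)
    (ha1_coer : ∀ v : V, α * ‖v‖ ^ 2 ≤ a1 v v)
    (T : V →ₗ[ℝ] V) (CV CT : ℝ)
    (hT_bdd : ∀ v : V, ‖T v‖ ≤ CV * ‖v‖)
    (hT_H : ∀ v : V, ‖ι (T v)‖ ≤ CT * ‖ι v‖)
    (S : ℕ → Submodule ℝ V) (hS_mono : Monotone S)
    (hS_ne : ∀ n, S n ≠ ⊥) (hS_fd : ∀ n, FiniteDimensional ℝ (S n))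
    (lam1 : ℝ)
    (hlam1 : lam1 = sInf {x : ℝ | ∃ v : V, v ≠ 0 ∧
      x = ((a0 v v + a1 (T v) (T v)) / 2) / ‖ι v‖ ^ 2})
    (hdensity : sInf {x : ℝ | ∃ v : V, (∃ n, v ∈ S n) ∧ v ≠ 0 ∧
      x = ((a0 v v + a1 (T v) (T v)) / 2) / ‖ι v‖ ^ 2} = lam1)
    (I : ℕ → V →ₗ[ℝ] V)
    (lamT : ℕ → ℝ)
    (hlamT : ∀ n, lamT n = sInf {x : ℝ | ∃ v : V, v ∈ S n ∧ v ≠ 0 ∧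
      x = ((a0 v v + a1 (I n (T v)) (I n (T v))) / 2) / ‖ι v‖ ^ 2})
    -- Condition (ii): H¹-convergence of the interpolated transfer operator
    (hii : ∀ f : V, (∃ m, f ∈ S m) →
      Tendsto (fun n => ‖I n (T f) - T f‖) atTop (𝓝 0))
    -- Condition (iii): L²-stability
    (C : ℝ) (hC : 0 < C)
    (hiii : ∀ m : ℕ, ∀ n ≥ m, ∀ v ∈ S m, ‖ι (I n (T v))‖ ≤ C * ‖ι v‖)
    :
    Tendsto lamT atTop (𝓝 lam1) :=
  to_ritz_value_convergence_general ι hι_inj hι_cpt a0 a1 M ha0_bdd ha1_bdd α hα ha0_coer ha1_coer T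
    CV hT_bdd S hS_mono hS_ne lam1 hlam1 hdensity I lamT hlamT hii C hiii
end

section
/- Eigenvector convergence: assume Conditions (ii) and (iii). Suppose for each n there is a Ritz vector ṽ_n ∈ S_n with ‖ι ṽ_n‖_H = 1 and ã_n(ṽ_n, ṽ_n) = λ̃_n, and suppose there is v ∈ V with ‖ι v‖_H = 1 and a(v,v) = λ₁ such that every w ∈ V with ‖ι w‖_H = 1 and a(w,w) = λ₁ satisfies w = v or w = −v (the eigenspace corresponding to λ₁ is one-dimensional). Then |⟨ι ṽ_n, ι v⟩_H| → 1 as n → ∞. -/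
open Filter Topology
open scoped RealInnerProductSpace

/-!
Along any subsequence the Ritz values are eventually below `λ₁ + ε` (density and Condition (ii)),
so by coercivity both the Ritz vectors `ṽₙ` and the transported interpolants `Iₙ (T ṽₙ)` are
bounded in `V`. A further subsequence converges weakly, `ṽₙ ⇀ u` and `Iₙ (T ṽₙ) ⇀ z`, and
compactness of `ι` makes both limits strong in `H`; hence `‖ι u‖ = 1`, and approximating `u`
from `⋃ Sₙ` together with Condition (iii) identifies `z = T u`. Weak lower semicontinuity of
`a⁰` and `a¹` gives `a(u,u) ≤ λ₁`, so `u` is a normalised eigenvector, `u = ±v`, and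
`|⟪ι ṽₙ, ι v⟫| → 1` along the subsequence.
-/

open Submodule InnerProductSpace

section WeakConvergence

variable {E : Type*} [NormedAddCommGroup E] [NormedSpace ℝ E]

def WeaklyTendsto (x : ℕ → E) (u : E) : Prop :=
  ∀ f : StrongDual ℝ E, Tendsto (fun k => f (x k)) atTop (𝓝 (f u))

theorem WeaklyTendsto.comp {x : ℕ → E} {u : E} (h : WeaklyTendsto x u) {φ : ℕ → ℕ}
    (hφ : Tendsto φ atTop atTop) : WeaklyTendsto (x ∘ φ) u :=
  fun f => (h f).comp hφ

theorem IsCompactOperator.tendsto_of_weaklyTendsto {H : Type*} [NormedAddCommGroup H]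
    [InnerProductSpace ℝ H] {A : E →L[ℝ] H} (hA : IsCompactOperator A) {x : ℕ → E} {R : ℝ}
    (hR : ∀ k, ‖x k‖ ≤ R) {u : E} (hxu : WeaklyTendsto x u) :
    Tendsto (fun k => A (x k)) atTop (𝓝 (A u)) := by
  refine tendsto_of_subseq_tendsto fun ns hns => ?_
  have hmem : ∀ k, A (x (ns k)) ∈ closure (A '' Metric.closedBall 0 R) := fun k =>
    subset_closure ⟨x (ns k), by simpa using hR (ns k), rfl⟩
  obtain ⟨h, -, ψ, hψ, hh⟩ :=
    (hA.isCompact_closure_image_closedBall (𝕜₁ := ℝ) R).tendsto_subseq hmem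
  -- a norm limit is also a weak limit, and weak limits in `H` are unique
  suffices h = A u from ⟨ψ, this ▸ hh⟩
  refine ext_inner_right ℝ fun g => tendsto_nhds_unique (hh.inner tendsto_const_nhds) ?_
  have := (hxu ((innerSL ℝ g).comp A)).comp (hns.comp hψ.tendsto_atTop)
  simpa [real_inner_comm g, Function.comp_def] using this

/-- Weak lower semicontinuity of a nonnegative quadratic form. -/
theorem WeaklyTendsto.exists_le_apply_self_tendsto (B : E →L[ℝ] E →L[ℝ] ℝ)
    (hB_symm : ∀ u v, B u v = B v u) (hB_nonneg : ∀ v, 0 ≤ B v v) {x : ℕ → E} {u : E}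
    (hxu : WeaklyTendsto x u) :
    ∃ ℓ : ℕ → ℝ, (∀ k, ℓ k ≤ B (x k) (x k)) ∧ Tendsto ℓ atTop (𝓝 (B u u)) := by
  refine ⟨fun k => 2 * B u (x k) - B u u, fun k => ?_, ?_⟩
  · have := hB_nonneg (x k - u)
    simp only [map_sub, sub_apply] at this
    linarith [hB_symm (x k) u]
  · simpa [two_mul] using ((hxu (B u)).const_mul 2).sub_const (B u u)

end WeakConvergence

theorem exists_subseq_weaklyTendsto {V : Type*} [NormedAddCommGroup V] [InnerProductSpace ℝ V]
    [CompleteSpace V] (x : ℕ → V) {R : ℝ} (hR : ∀ n, ‖x n‖ ≤ R) :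
    ∃ u ∈ (span ℝ (Set.range x)).topologicalClosure, ∃ φ : ℕ → ℕ, StrictMono φ ∧
      WeaklyTendsto (x ∘ φ) u := by
  set K := (span ℝ (Set.range x)).topologicalClosure
  have : TopologicalSpace.SeparableSpace K :=
    (TopologicalSpace.isSeparable_range (f := x)
      continuous_of_discreteTopology).span.closure.separableSpace
  have hxK : ∀ n, x n ∈ K := fun n => le_topologicalClosure _ (subset_span ⟨n, rfl⟩)
  -- sequential Banach–Alaoglu in the separable Hilbert space `K ≃ StrongDual ℝ K`
  let y : ℕ → WeakDual ℝ K := fun n => StrongDual.toWeakDual (toDual ℝ K ⟨x n, hxK n⟩)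
  have hy : ∀ n, y n ∈ WeakDual.toStrongDual ⁻¹' Metric.closedBall 0 R := fun n => by
    show dist (toDual ℝ K ⟨x n, hxK n⟩) 0 ≤ R
    rw [dist_zero_right, LinearIsometryEquiv.norm_map]
    exact hR n
  obtain ⟨g, -, φ, hφ, hg⟩ := WeakDual.isSeqCompact_closedBall (𝕜 := ℝ) (E := K) 0 R hy
  set u := (toDual ℝ K).symm (WeakDual.toStrongDual g)
  refine ⟨u, u.2, φ, hφ, fun f => ?_⟩
  set yf := (toDual ℝ K).symm (f.comp K.subtypeL)
  have hf : ∀ w : K, f w = ⟪yf, w⟫ := fun w => by simp [yf]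
  have hlim : f u = g yf := by
    rw [hf, real_inner_comm, ← toDual_apply_apply, LinearIsometryEquiv.apply_symm_apply]; rfl
  rw [hlim]
  convert ((WeakDual.eval_continuous yf).tendsto g).comp hg using 1
  ext k
  exact (hf ⟨x (φ k), hxK _⟩).trans (real_inner_comm _ _)

section RitzApproximation

variable {V H : Type*} [NormedAddCommGroup V] [InnerProductSpace ℝ V]
  [NormedAddCommGroup H] [InnerProductSpace ℝ H]
  (ι : V →L[ℝ] H) (a0 a1 : V →L[ℝ] V →L[ℝ] ℝ) (T : V →ₗ[ℝ] V) (S : ℕ → Submodule ℝ V)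
  (I : ℕ → V →ₗ[ℝ] V)

theorem eventually_ritz_lt_add (hS_mono : Monotone S) (ha0 : ∀ v, 0 ≤ a0 v v)
    (ha1 : ∀ v, 0 ≤ a1 v v) (hne : ∃ n, ∃ f ∈ S n, f ≠ 0) {lam1 : ℝ}
    (hdensity : sInf {x : ℝ | ∃ v : V, (∃ n, v ∈ S n) ∧ v ≠ 0 ∧
      x = ((a0 v v + a1 (T v) (T v)) / 2) / ‖ι v‖ ^ 2} = lam1)
    {lamT : ℕ → ℝ}
    (hlamT : ∀ n, lamT n = sInf {x : ℝ | ∃ v : V, v ∈ S n ∧ v ≠ 0 ∧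
      x = ((a0 v v + a1 (I n (T v)) (I n (T v))) / 2) / ‖ι v‖ ^ 2})
    (hii : ∀ f : V, (∃ m, f ∈ S m) → Tendsto (fun n => ‖I n (T f) - T f‖) atTop (𝓝 0))
    {ε : ℝ} (hε : 0 < ε) : ∀ᶠ n in atTop, lamT n < lam1 + ε := by
  obtain ⟨n₀, f₀, hf₀, hf₀0⟩ := hne
  have hlt := lt_add_of_pos_right lam1 hε
  nth_rewrite 1 [← hdensity] at hlt
  obtain ⟨_, ⟨f, ⟨m, hfm⟩, hf0, rfl⟩, hf_lt⟩ :=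
    exists_lt_of_csInf_lt (by exact ⟨_, f₀, ⟨n₀, hf₀⟩, hf₀0, rfl⟩) hlt
  have hIf : Tendsto (fun n => I n (T f)) atTop (𝓝 (T f)) :=
    tendsto_iff_norm_sub_tendsto_zero.2 (hii f ⟨m, hfm⟩)
  have hconv : Tendsto (fun n => ((a0 f f + a1 (I n (T f)) (I n (T f))) / 2) / ‖ι f‖ ^ 2)
      atTop (𝓝 (((a0 f f + a1 (T f) (T f)) / 2) / ‖ι f‖ ^ 2)) :=
    ((((a1.continuous₂.tendsto (T f, T f)).comp (hIf.prodMk_nhds hIf)).const_add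
      (a0 f f)).div_const 2).div_const _
  filter_upwards [hconv.eventually (gt_mem_nhds hf_lt), eventually_ge_atTop m] with n hn hmn
  refine lt_of_le_of_lt ?_ hn
  rw [hlamT n]
  refine csInf_le ⟨0, ?_⟩ ⟨f, hS_mono hmn hfm, hf0, rfl⟩
  rintro _ ⟨v, -, -, rfl⟩
  exact div_nonneg (div_nonneg (add_nonneg (ha0 v) (ha1 _)) two_pos.le) (sq_nonneg _)

theorem exists_norm_le_of_ritz {α : ℝ} (hα : 0 < α) (ha0_coer : ∀ v, α * ‖v‖ ^ 2 ≤ a0 v v)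
    (ha1_coer : ∀ v, α * ‖v‖ ^ 2 ≤ a1 v v) {lamT : ℕ → ℝ} (hbdd : BddAbove (Set.range lamT))
    {vt : ℕ → V}
    (hvt_min : ∀ n, (a0 (vt n) (vt n) + a1 (I n (T (vt n))) (I n (T (vt n)))) / 2 = lamT n) :
    ∃ R, ∀ n, ‖vt n‖ ≤ R ∧ ‖I n (T (vt n))‖ ≤ R := by
  obtain ⟨Λ, hΛ⟩ := hbdd
  have hle : ∀ y : V, α * ‖y‖ ^ 2 ≤ 2 * Λ → ‖y‖ ≤ √(2 * Λ / α) := fun y hy => by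
    simpa using Real.abs_le_sqrt ((le_div_iff₀' hα).2 hy)
  refine ⟨√(2 * Λ / α), fun n => ⟨hle _ ?_, hle _ ?_⟩⟩ <;>
  · have := hΛ ⟨n, rfl⟩
    linarith [hvt_min n, ha0_coer (vt n), ha1_coer (I n (T (vt n))),
      mul_nonneg hα.le (sq_nonneg ‖vt n‖), mul_nonneg hα.le (sq_nonneg ‖I n (T (vt n))‖)]

theorem half_add_le_of_weaklyTendsto (ha0_symm : ∀ u v, a0 u v = a0 v u)
    (ha0 : ∀ v, 0 ≤ a0 v v) (ha1_symm : ∀ u v, a1 u v = a1 v u) (ha1 : ∀ v, 0 ≤ a1 v v)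
    {x w : ℕ → V} {u z : V} (hxu : WeaklyTendsto x u) (hwz : WeaklyTendsto w z)
    {lam : ℕ → ℝ} {lam1 : ℝ} (hlam : ∀ ε > 0, ∀ᶠ k in atTop, lam k < lam1 + ε)
    (hsum : ∀ k, (a0 (x k) (x k) + a1 (w k) (w k)) / 2 = lam k) :
    (a0 u u + a1 z z) / 2 ≤ lam1 := by
  obtain ⟨ℓ0, hℓ0, hℓ0_lim⟩ := hxu.exists_le_apply_self_tendsto a0 ha0_symm ha0
  obtain ⟨ℓ1, hℓ1, hℓ1_lim⟩ := hwz.exists_le_apply_self_tendsto a1 ha1_symm ha1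
  refine le_of_forall_pos_le_add fun ε hε =>
    le_of_tendsto ((hℓ0_lim.add hℓ1_lim).div_const 2) ?_
  filter_upwards [hlam ε hε] with k hk
  linarith [hℓ0 k, hℓ1 k, hsum k]

theorem tendsto_interp_of_mem_closure {CT C : ℝ} (hT_H : ∀ v, ‖ι (T v)‖ ≤ CT * ‖ι v‖)
    (hCT : 0 ≤ CT) (hC : 0 ≤ C) (hS_mono : Monotone S)
    (hii : ∀ f : V, (∃ m, f ∈ S m) → Tendsto (fun n => ‖I n (T f) - T f‖) atTop (𝓝 0))
    (hiii : ∀ n, ∀ v ∈ S n, ‖ι (I n (T v))‖ ≤ C * ‖ι v‖)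
    {n : ℕ → ℕ} (hn : Tendsto n atTop atTop) {x : ℕ → V} (hx : ∀ k, x k ∈ S (n k)) {u : V}
    (hu : u ∈ (⨆ m, S m).topologicalClosure)
    (hxu : Tendsto (fun k => ι (x k)) atTop (𝓝 (ι u))) :
    Tendsto (fun k => ι (I (n k) (T (x k)))) atTop (𝓝 (ι (T u))) := by
  refine Metric.tendsto_nhds.2 fun ε hε => ?_
  have hδ : 0 < ε / (2 * (C + CT + 1)) := by positivity
  obtain ⟨_, ⟨p, hp, rfl⟩, hup⟩ := Metric.mem_closure_iff.1
    (map_mem_closure ι.continuous hu (Set.mapsTo_image _ _)) _ hδ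
  obtain ⟨m, hpm⟩ := (mem_iSup_of_directed S hS_mono.directed_le).1 hp
  have hlim : Tendsto (fun k => C * ‖ι (x k) - ι u‖ + ‖ι‖ * ‖I (n k) (T p) - T p‖)
      atTop (𝓝 0) := by
    simpa using ((tendsto_iff_norm_sub_tendsto_zero.1 hxu).const_mul C).add
      (((hii p ⟨m, hpm⟩).comp hn).const_mul ‖ι‖)
  filter_upwards [hlim.eventually (gt_mem_nhds (half_pos hε)),
    hn.eventually (eventually_ge_atTop m)] with k hk hmk
  -- (iii) bounds the first term, (ii) the second, and the `H`-bound of `T` the third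
  have hsplit : ι (I (n k) (T (x k))) - ι (T u) =
      ι (I (n k) (T (x k - p))) + ι (I (n k) (T p) - T p) + ι (T (p - u)) := by
    simp only [map_sub]
    abel
  have h1 : ‖ι (I (n k) (T (x k - p)))‖ ≤ C * ‖ι (x k) - ι u‖ + C * dist (ι u) (ι p) := by
    calc _ ≤ C * ‖ι (x k - p)‖ := hiii _ _ (sub_mem (hx k) (hS_mono hmk hpm))
      _ ≤ C * (‖ι (x k) - ι u‖ + dist (ι u) (ι p)) := by
        rw [map_sub, dist_eq_norm]
        exact mul_le_mul_of_nonneg_left (norm_sub_le_norm_sub_add_norm_sub _ _ _) hC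
      _ = _ := mul_add _ _ _
  have h2 : ‖ι (I (n k) (T p) - T p)‖ ≤ ‖ι‖ * ‖I (n k) (T p) - T p‖ := ι.le_opNorm _
  have h3 : ‖ι (T (p - u))‖ ≤ CT * dist (ι u) (ι p) := by
    simpa [dist_eq_norm, norm_sub_rev] using hT_H (p - u)
  have h4 : (C + CT) * dist (ι u) (ι p) ≤ ε / 2 := by
    calc (C + CT) * dist (ι u) (ι p) ≤ (C + CT + 1) * (ε / (2 * (C + CT + 1))) :=
          mul_le_mul (by linarith) hup.le dist_nonneg (by positivity)
      _ = ε / 2 := by field_simp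
  rw [dist_eq_norm, hsplit]
  calc _ ≤ _ := norm_add₃_le
    _ < ε := by linarith

theorem exists_subseq_ritz_tendsto [CompleteSpace V] (hι_inj : Function.Injective ι)
    (hι_cpt : IsCompactOperator ι) (ha0_symm : ∀ u v, a0 u v = a0 v u)
    (ha1_symm : ∀ u v, a1 u v = a1 v u) {α : ℝ} (hα : 0 < α)
    (ha0_coer : ∀ v, α * ‖v‖ ^ 2 ≤ a0 v v) (ha1_coer : ∀ v, α * ‖v‖ ^ 2 ≤ a1 v v)
    {CT : ℝ} (hCT : 0 ≤ CT) (hT_H : ∀ v, ‖ι (T v)‖ ≤ CT * ‖ι v‖) (hS_mono : Monotone S)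
    (hii : ∀ f : V, (∃ m, f ∈ S m) → Tendsto (fun n => ‖I n (T f) - T f‖) atTop (𝓝 0))
    {C : ℝ} (hC : 0 ≤ C) (hiii : ∀ n, ∀ v ∈ S n, ‖ι (I n (T v))‖ ≤ C * ‖ι v‖)
    {lam1 : ℝ} {lamT : ℕ → ℝ} (hU : ∀ ε > 0, ∀ᶠ n in atTop, lamT n < lam1 + ε)
    {vt : ℕ → V} (hvt_mem : ∀ n, vt n ∈ S n) (hvt_norm : ∀ n, ‖ι (vt n)‖ = 1)
    (hvt_min : ∀ n, (a0 (vt n) (vt n) + a1 (I n (T (vt n))) (I n (T (vt n)))) / 2 = lamT n)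
    {m : ℕ → ℕ} (hm : Tendsto m atTop atTop) :
    ∃ ψ : ℕ → ℕ, ∃ u : V, Tendsto (fun k => ι (vt (m (ψ k)))) atTop (𝓝 (ι u)) ∧
      ‖ι u‖ = 1 ∧ (a0 u u + a1 (T u) (T u)) / 2 ≤ lam1 := by
  have ha0 : ∀ v, 0 ≤ a0 v v := fun v => (mul_nonneg hα.le (sq_nonneg _)).trans (ha0_coer v)
  have ha1 : ∀ v, 0 ≤ a1 v v := fun v => (mul_nonneg hα.le (sq_nonneg _)).trans (ha1_coer v)
  obtain ⟨R, hR⟩ := exists_norm_le_of_ritz a0 a1 T I hα ha0_coer ha1_coer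
    (isBoundedUnder_of_eventually_le ((hU 1 one_pos).mono fun _ => le_of_lt)).bddAbove_range
    hvt_min
  obtain ⟨u, hu_span, φ, hφ, hxu⟩ := exists_subseq_weaklyTendsto (vt ∘ m) fun k => (hR _).1
  obtain ⟨z, -, χ, hχ, hwz⟩ := exists_subseq_weaklyTendsto
    (fun k => I (m (φ k)) (T (vt (m (φ k))))) fun k => (hR _).2
  replace hxu := hxu.comp hχ.tendsto_atTop
  have hmψ : Tendsto (m ∘ φ ∘ χ) atTop atTop := hm.comp (hφ.comp hχ).tendsto_atTop
  have hιx := hι_cpt.tendsto_of_weaklyTendsto (fun k => (hR _).1) hxu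
  have hιw := hι_cpt.tendsto_of_weaklyTendsto (fun k => (hR _).2) hwz
  have hu_mem : u ∈ (⨆ n, S n).topologicalClosure :=
    topologicalClosure_mono (span_le.2 (Set.range_subset_iff.2 fun k =>
      le_iSup S (m k) (hvt_mem _))) hu_span
  have hz : z = T u := hι_inj <| tendsto_nhds_unique hιw <|
    tendsto_interp_of_mem_closure ι T S I hT_H hCT hC hS_mono hii hiii hmψ
      (fun k => hvt_mem _) hu_mem hιx
  refine ⟨φ ∘ χ, u, hιx, tendsto_nhds_unique hιx.norm (by simp [hvt_norm]), hz ▸ ?_⟩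
  exact half_add_le_of_weaklyTendsto a0 a1 ha0_symm ha0 ha1_symm ha1 hxu hwz
    (fun ε hε => hmψ.eventually (hU ε hε)) fun k => hvt_min _

end RitzApproximation

theorem to_ritz_eigenvector_convergence_general
    {V H : Type*}
    [NormedAddCommGroup V] [InnerProductSpace ℝ V] [CompleteSpace V]
    [NormedAddCommGroup H] [InnerProductSpace ℝ H]
    (ι : V →L[ℝ] H) (hι_inj : Function.Injective ι)
    (hι_cpt : IsCompactOperator ι)
    (a0 a1 : V →ₗ[ℝ] V →ₗ[ℝ] ℝ)
    (ha0_symm : ∀ u v : V, a0 u v = a0 v u)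
    (ha1_symm : ∀ u v : V, a1 u v = a1 v u)
    (M : ℝ)
    (ha0_bdd : ∀ u v : V, |a0 u v| ≤ M * ‖u‖ * ‖v‖)
    (ha1_bdd : ∀ u v : V, |a1 u v| ≤ M * ‖u‖ * ‖v‖)
    (α : ℝ) (hα : 0 < α)
    (ha0_coer : ∀ v : V, α * ‖v‖ ^ 2 ≤ a0 v v)
    (ha1_coer : ∀ v : V, α * ‖v‖ ^ 2 ≤ a1 v v)
    (T : V →ₗ[ℝ] V) (CT : ℝ)
    (hT_H : ∀ v : V, ‖ι (T v)‖ ≤ CT * ‖ι v‖)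
    (S : ℕ → Submodule ℝ V) (hS_mono : Monotone S)
    (lam1 : ℝ)
    (hlam1 : lam1 = sInf {x : ℝ | ∃ v : V, v ≠ 0 ∧
      x = ((a0 v v + a1 (T v) (T v)) / 2) / ‖ι v‖ ^ 2})
    (hdensity : sInf {x : ℝ | ∃ v : V, (∃ n, v ∈ S n) ∧ v ≠ 0 ∧
      x = ((a0 v v + a1 (T v) (T v)) / 2) / ‖ι v‖ ^ 2} = lam1)
    (I : ℕ → V →ₗ[ℝ] V)
    (lamT : ℕ → ℝ)
    (hlamT : ∀ n, lamT n = sInf {x : ℝ | ∃ v : V, v ∈ S n ∧ v ≠ 0 ∧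
      x = ((a0 v v + a1 (I n (T v)) (I n (T v))) / 2) / ‖ι v‖ ^ 2})
    -- Condition (ii): H¹-convergence of the interpolated transfer operator
    (hii : ∀ f : V, (∃ m, f ∈ S m) →
      Tendsto (fun n => ‖I n (T f) - T f‖) atTop (𝓝 0))
    -- Condition (iii): L²-stability
    (C : ℝ) (hC : 0 < C)
    (hiii : ∀ m : ℕ, ∀ n ≥ m, ∀ v ∈ S m, ‖ι (I n (T v))‖ ≤ C * ‖ι v‖)
    -- Ritz vectors
    (vt : ℕ → V) (hvt_mem : ∀ n, vt n ∈ S n) (hvt_norm : ∀ n, ‖ι (vt n)‖ = 1)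
    (hvt_min : ∀ n, (a0 (vt n) (vt n)
      + a1 (I n (T (vt n))) (I n (T (vt n)))) / 2 = lamT n)
    -- a normalised eigenvector for λ₁
    (v : V) (hv_norm : ‖ι v‖ = 1)
    -- the eigenspace corresponding to λ₁ is one-dimensional
    (hv_unique : ∀ w : V, ‖ι w‖ = 1 →
      (a0 w w + a1 (T w) (T w)) / 2 = lam1 → w = v ∨ w = -v)
    :
    Tendsto (fun n => |⟪ι (vt n), ι v⟫|) atTop (𝓝 1) := by
  let b0 := a0.mkContinuous₂ M fun u w => (Real.norm_eq_abs _).trans_le (ha0_bdd u w)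
  let b1 := a1.mkContinuous₂ M fun u w => (Real.norm_eq_abs _).trans_le (ha1_bdd u w)
  have hb0 : ∀ w, 0 ≤ b0 w w := fun w => (mul_nonneg hα.le (sq_nonneg _)).trans (ha0_coer w)
  have hb1 : ∀ w, 0 ≤ b1 w w := fun w => (mul_nonneg hα.le (sq_nonneg _)).trans (ha1_coer w)
  have hvt0 : vt 0 ≠ 0 := fun h => by simpa [h] using hvt_norm 0
  have hCT : 0 ≤ CT := by nlinarith [hT_H v, norm_nonneg (ι (T v))]
  have hU : ∀ ε > 0, ∀ᶠ n in atTop, lamT n < lam1 + ε := fun ε hε =>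
    eventually_ritz_lt_add ι b0 b1 T S I hS_mono hb0 hb1 ⟨0, vt 0, hvt_mem 0, hvt0⟩ hdensity
      hlamT hii hε
  refine tendsto_of_subseq_tendsto fun m hm => ?_
  obtain ⟨ψ, u, hxu, hιu, hu_le⟩ := exists_subseq_ritz_tendsto ι b0 b1 T S I hι_inj hι_cpt
    ha0_symm ha1_symm hα ha0_coer ha1_coer hCT hT_H hS_mono hii hC.le
    (fun n => hiii n n le_rfl) hU hvt_mem hvt_norm hvt_min hm
  have hu_eig : (a0 u u + a1 (T u) (T u)) / 2 = lam1 := by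
    refine le_antisymm hu_le ?_
    have hle : lam1 ≤ ((a0 u u + a1 (T u) (T u)) / 2) / ‖ι u‖ ^ 2 := by
      rw [hlam1]
      refine csInf_le ⟨0, ?_⟩ ⟨u, fun h => by simp [h] at hιu, rfl⟩
      rintro _ ⟨w, -, rfl⟩
      exact div_nonneg (div_nonneg (add_nonneg (hb0 w) (hb1 _)) two_pos.le) (sq_nonneg _)
    rwa [hιu, one_pow, div_one] at hle
  have hinner : |⟪ι u, ι v⟫| = 1 := by
    rcases hv_unique u hιu hu_eig with rfl | rfl <;>
      simp [hv_norm]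
  exact ⟨ψ, hinner ▸ (hxu.inner tendsto_const_nhds).abs⟩

/-- **Eigenvector convergence (Theorem 4.4 of the paper).**  Under Conditions (ii)
and (iii), if `ṽₙ ∈ Sₙ` are Ritz vectors with `‖ι ṽₙ‖ = 1` and
`ãₙ(ṽₙ,ṽₙ) = λ̃ₙ`, and the eigenspace of `λ₁` is one-dimensional, spanned by a
minimiser `v` with `‖ι v‖ = 1` and `a(v,v) = λ₁`, then `|⟨ι ṽₙ, ι v⟩| → 1`. -/
theorem to_ritz_eigenvector_convergence
    {V H : Type*}
    [NormedAddCommGroup V] [InnerProductSpace ℝ V] [CompleteSpace V]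
    [NormedAddCommGroup H] [InnerProductSpace ℝ H] [CompleteSpace H]
    (ι : V →L[ℝ] H) (hι_inj : Function.Injective ι)
    (hι_cpt : IsCompactOperator ι)
    (a0 a1 : V →ₗ[ℝ] V →ₗ[ℝ] ℝ)
    (ha0_symm : ∀ u v : V, a0 u v = a0 v u)
    (ha1_symm : ∀ u v : V, a1 u v = a1 v u)
    (M : ℝ)
    (ha0_bdd : ∀ u v : V, |a0 u v| ≤ M * ‖u‖ * ‖v‖)
    (ha1_bdd : ∀ u v : V, |a1 u v| ≤ M * ‖u‖ * ‖v‖)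
    (α : ℝ) (hα : 0 < α)
    (ha0_coer : ∀ v : V, α * ‖v‖ ^ 2 ≤ a0 v v)
    (ha1_coer : ∀ v : V, α * ‖v‖ ^ 2 ≤ a1 v v)
    (T : V →ₗ[ℝ] V) (CV CT : ℝ)
    (hT_bdd : ∀ v : V, ‖T v‖ ≤ CV * ‖v‖)
    (hT_H : ∀ v : V, ‖ι (T v)‖ ≤ CT * ‖ι v‖)
    (S : ℕ → Submodule ℝ V) (hS_mono : Monotone S)
    (hS_ne : ∀ n, S n ≠ ⊥) (hS_fd : ∀ n, FiniteDimensional ℝ (S n))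
    (lam1 : ℝ)
    (hlam1 : lam1 = sInf {x : ℝ | ∃ v : V, v ≠ 0 ∧
      x = ((a0 v v + a1 (T v) (T v)) / 2) / ‖ι v‖ ^ 2})
    (hdensity : sInf {x : ℝ | ∃ v : V, (∃ n, v ∈ S n) ∧ v ≠ 0 ∧
      x = ((a0 v v + a1 (T v) (T v)) / 2) / ‖ι v‖ ^ 2} = lam1)
    (I : ℕ → V →ₗ[ℝ] V)
    (lamT : ℕ → ℝ)
    (hlamT : ∀ n, lamT n = sInf {x : ℝ | ∃ v : V, v ∈ S n ∧ v ≠ 0 ∧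
      x = ((a0 v v + a1 (I n (T v)) (I n (T v))) / 2) / ‖ι v‖ ^ 2})
    -- Condition (ii): H¹-convergence of the interpolated transfer operator
    (hii : ∀ f : V, (∃ m, f ∈ S m) →
      Tendsto (fun n => ‖I n (T f) - T f‖) atTop (𝓝 0))
    -- Condition (iii): L²-stability
    (C : ℝ) (hC : 0 < C)
    (hiii : ∀ m : ℕ, ∀ n ≥ m, ∀ v ∈ S m, ‖ι (I n (T v))‖ ≤ C * ‖ι v‖)
    -- Ritz vectors
    (vt : ℕ → V) (hvt_mem : ∀ n, vt n ∈ S n) (hvt_norm : ∀ n, ‖ι (vt n)‖ = 1)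
    (hvt_min : ∀ n, (a0 (vt n) (vt n)
      + a1 (I n (T (vt n))) (I n (T (vt n)))) / 2 = lamT n)
    -- a normalised eigenvector for λ₁
    (v : V) (hv_norm : ‖ι v‖ = 1)
    (hv_eig : (a0 v v + a1 (T v) (T v)) / 2 = lam1)
    -- the eigenspace corresponding to λ₁ is one-dimensional
    (hv_unique : ∀ w : V, ‖ι w‖ = 1 →
      (a0 w w + a1 (T w) (T w)) / 2 = lam1 → w = v ∨ w = -v)
    :
    Tendsto (fun n => |⟪ι (vt n), ι v⟫|) atTop (𝓝 1) :=
  to_ritz_eigenvector_convergence_general ι hι_inj hι_cpt a0 a1 ha0_symm ha1_symm M ha0_bdd ha1_bdd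
    α hα ha0_coer ha1_coer T CT hT_H S hS_mono lam1 hlam1 hdensity I lamT hlamT hii C hC hiii vt
    hvt_mem hvt_norm hvt_min v hv_norm hv_unique
end

section
/- Let d ≥ 1, let F : ℝ^d → ℝ^d be an L-Lipschitz map (L ≥ 0), and let h, h', a, A, A' > 0 with a ≤ A. Let x' ∈ ℝ^d and let τ' ⊆ ℝ^d be a set contained in the closed ball B(x', A'h'). Let s be a finite index set and for each i ∈ s let x_i ∈ ℝ^d and τ_i ⊆ ℝ^d be sets with B(x_i, a·h) ⊆ τ_i ⊆ B(x_i, A·h), such that the balls B(x_i, a·h), i ∈ s, are pairwise disjoint. Then the number of indices i ∈ s for which τ_i intersects the image F(τ') is at most ((L·A'·h' + 2·A·h)/(a·h))^d. In particular, if h' ≥ h this number is bounded by C·((h'+h)/h)^d for a constant C depending only on L, a, A, A' and d. -/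
open Metric MeasureTheory ENNReal

/-- **Lemma A.1 (overlap counting for quasi-uniform meshes).**  Let `F` be an
`L`-Lipschitz map on `ℝ^d`, let `τ'` be contained in the closed ball
`B(x', A'h')`, and let `(τ i)_{i ∈ s}` be sets with
`B(x i, a·h) ⊆ τ i ⊆ B(x i, A·h)` whose inner balls are pairwise disjoint.
Then at most `((L·A'·h' + 2·A·h)/(a·h))^d` of the sets `τ i` meet `F(τ')`;
in particular, for `h ≤ h'` this number is bounded by `C·((h'+h)/h)^d` with
`C = (max (L·A') (2·A) / a)^d` depending only on `L, a, A, A'` and `d`. -/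
theorem overlap_counting_bound {d : ℕ} (hd : 1 ≤ d)
    (L : NNReal) (F : EuclideanSpace ℝ (Fin d) → EuclideanSpace ℝ (Fin d))
    (hF : LipschitzWith L F)
    (h h' a A A' : ℝ) (hh : 0 < h) (hh' : 0 < h') (ha : 0 < a) (hA : 0 < A)
    (hA' : 0 < A') (haA : a ≤ A)
    (x' : EuclideanSpace ℝ (Fin d)) (τ' : Set (EuclideanSpace ℝ (Fin d)))
    (hτ' : τ' ⊆ Metric.closedBall x' (A' * h'))
    {ix : Type*} (s : Finset ix)
    (x : ix → EuclideanSpace ℝ (Fin d)) (τ : ix → Set (EuclideanSpace ℝ (Fin d)))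
    (hτ₁ : ∀ i ∈ s, Metric.closedBall (x i) (a * h) ⊆ τ i)
    (hτ₂ : ∀ i ∈ s, τ i ⊆ Metric.closedBall (x i) (A * h))
    (hdisj : (s : Set ix).Pairwise (fun i j =>
      Disjoint (Metric.closedBall (x i) (a * h)) (Metric.closedBall (x j) (a * h)))) :
    ({i : ix | i ∈ s ∧ (τ i ∩ F '' τ').Nonempty}.ncard : ℝ)
        ≤ (((L : ℝ) * A' * h' + 2 * A * h) / (a * h)) ^ d ∧
      (h ≤ h' →
        ({i : ix | i ∈ s ∧ (τ i ∩ F '' τ').Nonempty}.ncard : ℝ)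
          ≤ (max ((L : ℝ) * A') (2 * A) / a) ^ d * ((h' + h) / h) ^ d) := by
  classical
  set R : ℝ := (L : ℝ) * A' * h' + 2 * A * h with hR
  have hL0 : (0:ℝ) ≤ (L:ℝ) := L.coe_nonneg
  have hRpos : 0 < R := by positivity
  have hahpos : 0 < a * h := by positivity
  set t : Finset ix := s.filter (fun i => (τ i ∩ F '' τ').Nonempty) with ht
  have hset : {i : ix | i ∈ s ∧ (τ i ∩ F '' τ').Nonempty} = ↑t := by
    ext i; simp [ht]
  have hncard : {i : ix | i ∈ s ∧ (τ i ∩ F '' τ').Nonempty}.ncard = t.card := by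
    rw [hset, Set.ncard_coe_finset]
  -- inclusion of small balls in the big ball
  have hsub : ∀ i ∈ t, closedBall (x i) (a * h) ⊆ closedBall (F x') R := by
    intro i hi
    rw [ht, Finset.mem_filter] at hi
    obtain ⟨his, y, hyτ, hyF⟩ := hi
    obtain ⟨z, hzτ', rfl⟩ := hyF
    intro w hw
    rw [mem_closedBall] at hw ⊢
    have h1 : dist (x i) (F z) ≤ A * h := by
      have := hτ₂ i his hyτ
      rw [mem_closedBall, dist_comm] at this
      exact this
    have h2 : dist (F z) (F x') ≤ (L:ℝ) * (A' * h') := by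
      calc dist (F z) (F x') ≤ (L:ℝ) * dist z x' := hF.dist_le_mul z x'
        _ ≤ (L:ℝ) * (A' * h') :=
          mul_le_mul_of_nonneg_left (hτ' hzτ') hL0
    have h3 : dist w (x i) ≤ a * h := hw
    have hah : a * h ≤ A * h := mul_le_mul_of_nonneg_right haA hh.le
    calc dist w (F x') ≤ dist w (x i) + dist (x i) (F z) + dist (F z) (F x') :=
        dist_triangle4 w (x i) (F z) (F x')
      _ ≤ a * h + A * h + (L:ℝ) * (A' * h') := by
        exact add_le_add (add_le_add h3 h1) h2
      _ ≤ R := by rw [hR]; nlinarith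
  -- measure computation
  set μ := (volume : Measure (EuclideanSpace ℝ (Fin d)))
  have hd' : Module.finrank ℝ (EuclideanSpace ℝ (Fin d)) = d := finrank_euclideanSpace_fin
  have hball : ∀ (c : EuclideanSpace ℝ (Fin d)) (r : ℝ), 0 ≤ r →
      μ (closedBall c r) = ENNReal.ofReal (r ^ d) * μ (ball 0 1) := by
    intro c r hr
    rw [Measure.addHaar_closedBall μ c hr, hd']
  have hpw : (↑t : Set ix).PairwiseDisjoint (fun i => closedBall (x i) (a * h)) :=
    hdisj.mono (by exact_mod_cast Finset.filter_subset _ s)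
  have hsum : ∑ i ∈ t, μ (closedBall (x i) (a * h))
      = μ (⋃ i ∈ t, closedBall (x i) (a * h)) :=
    (measure_biUnion_finset hpw (fun i _ => measurableSet_closedBall)).symm
  have hle : ∑ i ∈ t, μ (closedBall (x i) (a * h)) ≤ μ (closedBall (F x') R) := by
    rw [hsum]
    exact measure_mono (Set.iUnion₂_subset hsub)
  have hc0 : μ (ball (0 : EuclideanSpace ℝ (Fin d)) 1) ≠ 0 :=
    (measure_ball_pos μ _ one_pos).ne'
  have hctop : μ (ball (0 : EuclideanSpace ℝ (Fin d)) 1) ≠ ⊤ :=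
    measure_ball_lt_top.ne
  have hle2 : (t.card : ℝ≥0∞) * ENNReal.ofReal ((a * h) ^ d) ≤ ENNReal.ofReal (R ^ d) := by
    have : (t.card : ℝ≥0∞) * ENNReal.ofReal ((a * h) ^ d) * μ (ball 0 1)
        ≤ ENNReal.ofReal (R ^ d) * μ (ball 0 1) := by
      calc (t.card : ℝ≥0∞) * ENNReal.ofReal ((a * h) ^ d) * μ (ball 0 1)
          = ∑ _i ∈ t, ENNReal.ofReal ((a * h) ^ d) * μ (ball 0 1) := by
            rw [Finset.sum_const, nsmul_eq_mul, mul_assoc]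
        _ = ∑ i ∈ t, μ (closedBall (x i) (a * h)) := by
            refine Finset.sum_congr rfl fun i _ => ?_
            rw [hball (x i) (a * h) hahpos.le]
        _ ≤ μ (closedBall (F x') R) := hle
        _ = ENNReal.ofReal (R ^ d) * μ (ball 0 1) := hball _ _ hRpos.le
    exact (ENNReal.mul_le_mul_iff_left hc0 hctop).mp this
  have main : (t.card : ℝ) ≤ (R / (a * h)) ^ d := by
    have h1 : ENNReal.ofReal ((t.card : ℝ) * (a * h) ^ d) ≤ ENNReal.ofReal (R ^ d) := by
      rw [ENNReal.ofReal_mul (by positivity), ENNReal.ofReal_natCast]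
      exact hle2
    have h2 : (t.card : ℝ) * (a * h) ^ d ≤ R ^ d :=
      (ENNReal.ofReal_le_ofReal_iff (by positivity)).mp h1
    rw [div_pow, le_div_iff₀ (by positivity)]
    exact h2
  refine ⟨by rw [hncard]; exact main, fun _ => ?_⟩
  rw [hncard]
  refine main.trans ?_
  rw [← mul_pow]
  apply pow_le_pow_left₀ (by positivity)
  rw [div_mul_div_comm]
  gcongr
  have h1 : (L:ℝ) * A' * h' ≤ max ((L:ℝ) * A') (2 * A) * h' :=
    mul_le_mul_of_nonneg_right (le_max_left _ _) hh'.le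
  have h2 : 2 * A * h ≤ max ((L:ℝ) * A') (2 * A) * h :=
    mul_le_mul_of_nonneg_right (le_max_right _ _) hh.le
  rw [mul_add]
  linarith
end
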